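/- arXiv:2206.14556 — 14 statements merged into one kernel-verified Lean document; each statement's English description precedes it below -/
import Mathlib

section
/- Let G be a connected chordal bipartite graph and r a vertex of G. Let x and y be two vertices at distance i from r. If there is a vertex z at distance i+1 from r adjacent to both x and y, then N(x) ∩ N^{i-1}(r) ⊆ N(y) or N(y) ∩ N^{i-1}(r) ⊆ N(x). -/
/-!
Levels are distances from `r`. Suppose `a ∈ N(x) \ N(y)` and `b ∈ N(y) \ N(x)` both lie on level
`i - 1`. Join `a` to `b` by a shortest path all of whose inner vertices lie strictly below level
`i - 1`; being shortest, it is chordless. In a connected bipartite graph adjacent vertices lie on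
consecutive levels, so the only edges between `x, y, z` and this path are `xa` and `yb`, and
`y z x a … b y` is an induced cycle. It has length at least `5` because `a ≠ b`.
-/

/-- A cycle is induced if the only edges of `G` between its vertices are its own edges. -/
def IsInducedCycle {V : Type*} (G : SimpleGraph V) {v : V} (c : G.Walk v v) : Prop :=
  c.IsCycle ∧ ∀ x ∈ c.support, ∀ y ∈ c.support, G.Adj x y → s(x, y) ∈ c.edges

namespace SimpleGraph

variable {V : Type*} {G : SimpleGraph V}

theorem Coloring.dist_eq_add_one_or_of_adj (c : G.Coloring Bool) {r u v : V}
    (hr : G.Reachable r u) (h : G.Adj u v) :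
    G.dist r v = G.dist r u + 1 ∨ G.dist r u = G.dist r v + 1 := by
  have hne : G.dist r u ≠ G.dist r v := by
    intro heq
    obtain ⟨p, hp⟩ := hr.exists_walk_length_eq_dist
    obtain ⟨q, hq⟩ := (hr.trans h.reachable).exists_walk_length_eq_dist
    have hpc := c.even_length_iff_congr p
    have hqc := c.even_length_iff_congr q
    rw [hp, heq, ← hq, hqc] at hpc
    exact c.valid h (Bool.eq_iff_iff.mpr (by tauto))
  rcases h.diff_dist_adj (u := r) with h' | h' | h' <;> omega

namespace Walk

theorem dist_lt_of_mem_support_of_length_eq_dist {r a w : V} (p : G.Walk r a)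
    (hp : p.length = G.dist r a) (hw : w ∈ p.support) (hwa : w ≠ a) :
    G.dist r w < G.dist r a := by
  obtain ⟨p₁, p₂, rfl⟩ := mem_support_iff_exists_append.mp hw
  have h₁ := dist_le p₁
  have h₂ : p₂.length ≠ 0 := fun h => hwa (eq_of_length_eq_zero h)
  rw [length_append] at hp
  omega

theorem mem_edges_of_length_eq_one {u v : V} (p : G.Walk u v) (hp : p.length = 1) :
    s(u, v) ∈ p.edges := by
  cases p with
  | nil => simp at hp
  | cons h q =>
    obtain rfl := eq_of_length_eq_zero (by simpa using hp : q.length = 0)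
    simp

theorem isChordless_of_forall_length_le {u v : V} {p : G.Walk u v}
    (hmin : ∀ q : G.Walk u v, q.support ⊆ p.support → p.length ≤ q.length) :
    p.IsChordless := by
  have key : ∀ {c d : V} (p₁ : G.Walk u c) (p₂ : G.Walk c d) (p₃ : G.Walk d v),
      p = p₁.append (p₂.append p₃) → G.Adj c d → s(c, d) ∈ p.edges := by
    intro c d p₁ p₂ p₃ hp hcd
    have hshort := hmin (p₁.append (cons hcd p₃)) (by
      intro w hw
      simp only [hp, mem_support_append_iff, support_cons, List.mem_cons] at hw ⊢
      rcases hw with hw | rfl | hw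
      · exact .inl hw
      · exact .inr (.inl p₂.start_mem_support)
      · exact .inr (.inr hw))
    have hlen : p₂.length = 1 := by
      have : p₂.length ≠ 0 := fun h => hcd.ne (eq_of_length_eq_zero h)
      simp only [hp, length_append, length_cons] at hshort
      omega
    rw [hp, edges_append, edges_append]
    exact List.mem_append_right _ (List.mem_append_left _ (p₂.mem_edges_of_length_eq_one hlen))
  rw [isChordless_iff_forall_mem_edges]
  intro c d hc hd hcd
  obtain ⟨p₁, p₂, rfl⟩ := mem_support_iff_exists_append.mp hc
  rcases (mem_support_append_iff _ _).mp hd with hd | hd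
  · obtain ⟨p₃, p₄, rfl⟩ := mem_support_iff_exists_append.mp hd
    rw [Sym2.eq_swap]
    exact key p₃ p₄ p₂ (append_assoc _ _ _).symm hcd.symm
  · obtain ⟨p₃, p₄, rfl⟩ := mem_support_iff_exists_append.mp hd
    exact key p₁ p₃ p₄ rfl hcd

theorem exists_isPath_isChordless_of_support_subset {S : Set V} {u v : V} (p : G.Walk u v)
    (hp : ∀ w ∈ p.support, w ∈ S) :
    ∃ q : G.Walk u v, q.IsPath ∧ q.IsChordless ∧ ∀ w ∈ q.support, w ∈ S := by
  classical
  have hex : ∃ n, ∃ q : G.Walk u v, (∀ w ∈ q.support, w ∈ S) ∧ q.length = n := ⟨_, p, hp, rfl⟩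
  obtain ⟨q, hqS, hq⟩ := Nat.find_spec hex
  have hbS : ∀ w ∈ q.bypass.support, w ∈ S := fun w hw =>
    hqS w (q.support_bypass_subset_support hw)
  refine ⟨q.bypass, q.bypass_isPath, isChordless_of_forall_length_le fun q' hq' => ?_, hbS⟩
  calc q.bypass.length ≤ q.length := q.length_bypass_le_length
    _ = Nat.find hex := hq
    _ ≤ q'.length := Nat.find_min' hex ⟨q', fun w hw => hbS w (hq' hw), rfl⟩

end Walk

open Walk

theorem isInducedCycle_cons_cons_cons_concat {a b x y z : V} {q : G.Walk a b}
    (hq : q.IsPath) (hqc : q.IsChordless)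
    (hyz : G.Adj y z) (hzx : G.Adj z x) (hxa : G.Adj x a) (hby : G.Adj b y)
    (hxy : x ≠ y) (hnxy : ¬ G.Adj x y)
    (hxq : x ∉ q.support) (hyq : y ∉ q.support) (hzq : z ∉ q.support)
    (hzq_adj : ∀ w ∈ q.support, ¬ G.Adj z w) (hxq_adj : ∀ w ∈ q.support, G.Adj x w → w = a)
    (hyq_adj : ∀ w ∈ q.support, G.Adj y w → w = b) :
    IsInducedCycle G (cons hyz (cons hzx (cons hxa (q.concat hby)))) := by
  have hW : (cons hzx (cons hxa (q.concat hby))).IsPath := by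
    refine ((hq.concat hyq hby).cons ?_).cons ?_
    · simp only [support_concat, List.mem_append, List.mem_cons, List.not_mem_nil, or_false,
        not_or]
      exact ⟨hxq, hxy⟩
    · simp only [support_cons, support_concat, List.mem_cons, List.mem_append, List.not_mem_nil,
        or_false, not_or]
      exact ⟨hzx.ne, hzq, hyz.ne.symm⟩
  refine ⟨(cons_isCycle_iff _ _).mpr ⟨hW, fun h => ?_⟩, ?_⟩
  · have := hW.length_eq_one_of_mem_edges (Sym2.eq_swap ▸ h)
    simp only [length_cons, length_concat] at this
    omega
  · have hout : ∀ u v, (u = x ∨ u = y ∨ u = z) → ((v = x ∨ v = y ∨ v = z) ∨ v ∈ q.support) →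
        G.Adj u v →
          s(u, v) = s(y, z) ∨ s(u, v) = s(z, x) ∨ s(u, v) = s(x, a) ∨ s(u, v) = s(b, y) := by
      grind [Adj.symm, G.loopless.irrefl]
    have hsupp : ∀ w ∈ (cons hyz (cons hzx (cons hxa (q.concat hby)))).support,
        (w = x ∨ w = y ∨ w = z) ∨ w ∈ q.support := by
      simp only [support_concat, support_cons, List.mem_cons, List.mem_append, List.not_mem_nil]
      tauto
    intro u hu v hv huv
    simp only [edges_concat, edges_cons, List.concat_eq_append, List.mem_cons, List.mem_append]
    rcases hsupp u hu with hu | hu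
    · have := hout u v hu (hsupp v hv) huv
      tauto
    rcases hsupp v hv with hv | hv
    · have := hout v u hv (.inr hu) huv.symm
      rw [Sym2.eq_swap]
      tauto
    · exact .inr (.inr (.inr (.inl (hqc.mem_edges hu hv huv))))

theorem isInducedCycle_of_levels (ℓ : V → ℕ)
    (hℓ : ∀ ⦃u v⦄, G.Adj u v → ℓ v = ℓ u + 1 ∨ ℓ u = ℓ v + 1)
    {a b x y z : V} {q : G.Walk a b} (hq : q.IsPath) (hqc : q.IsChordless)
    (hqℓ : ∀ w ∈ q.support, w = a ∨ w = b ∨ ℓ w < ℓ a)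
    (hyz : G.Adj y z) (hzx : G.Adj z x) (hxa : G.Adj x a) (hby : G.Adj b y)
    (hxb : ¬ G.Adj x b) (hya : ¬ G.Adj y a)
    (ha : ℓ a + 1 = ℓ x) (hb : ℓ b = ℓ a) (hy : ℓ y = ℓ x) (hz : ℓ z = ℓ x + 1) :
    IsInducedCycle G (cons hyz (cons hzx (cons hxa (q.concat hby)))) := by
  have hq_lt : ∀ w ∈ q.support, ℓ w < ℓ x := fun w hw => by
    obtain rfl | rfl | h := hqℓ w hw <;> omega
  refine isInducedCycle_cons_cons_cons_concat hq hqc hyz hzx hxa hby (fun h => hya (h ▸ hxa))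
    (fun h => by have := hℓ h; omega) (fun h => by have := hq_lt x h; omega)
    (fun h => by have := hq_lt y h; omega) (fun h => by have := hq_lt z h; omega)
    (fun w hw h => by have := hq_lt w hw; have := hℓ h; omega) ?_ ?_
  · intro w hw h
    obtain rfl | rfl | h' := hqℓ w hw
    · rfl
    · exact absurd h hxb
    · have := hℓ h; omega
  · intro w hw h
    obtain rfl | rfl | h' := hqℓ w hw
    · exact absurd h hya
    · rfl
    · have := hℓ h; omega

theorem Reachable.exists_isPath_isChordless_of_dist_eq {r a b : V} (ha : G.Reachable r a)
    (hb : G.Reachable r b) (hab : G.dist r a = G.dist r b) :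
    ∃ q : G.Walk a b, q.IsPath ∧ q.IsChordless ∧
      ∀ w ∈ q.support, w = a ∨ w = b ∨ G.dist r w < G.dist r a := by
  obtain ⟨pa, hpa⟩ := ha.exists_walk_length_eq_dist
  obtain ⟨pb, hpb⟩ := hb.exists_walk_length_eq_dist
  refine (pa.reverse.append pb).exists_isPath_isChordless_of_support_subset fun w hw => ?_
  rcases (mem_support_append_iff _ _).mp hw with hw | hw
  · rw [support_reverse, List.mem_reverse] at hw
    by_cases hwa : w = a
    · exact .inl hwa
    · exact .inr (.inr (pa.dist_lt_of_mem_support_of_length_eq_dist hpa hw hwa))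
  · by_cases hwb : w = b
    · exact .inr (.inl hwb)
    · exact .inr (.inr (hab ▸ pb.dist_lt_of_mem_support_of_length_eq_dist hpb hw hwb))

end SimpleGraph

open SimpleGraph Walk in
/-- Let `G` be a connected chordal bipartite graph, `x, y` vertices at distance `i`
from `r`, and `z` a common neighbor of `x` and `y` at distance `i+1` from `r`. Then
`N(x) ∩ N^{i-1}(r) ⊆ N(y)` or `N(y) ∩ N^{i-1}(r) ⊆ N(x)`. -/
theorem chordal_bipartite_nested_neighborhoods {V : Type*} (G : SimpleGraph V)
    (hconn : G.Connected)
    (hbip : ∃ f : V → Bool, ∀ u v : V, G.Adj u v → f u ≠ f v)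
    (hcb : ∀ (v : V) (c : G.Walk v v), IsInducedCycle G c → c.length = 4)
    (r x y z : V) (i : ℕ)
    (hx : G.dist r x = i) (hy : G.dist r y = i) (hz : G.dist r z = i + 1)
    (hzx : G.Adj z x) (hzy : G.Adj z y) :
    (G.neighborSet x ∩ {w | G.dist r w = i - 1} ⊆ G.neighborSet y) ∨
    (G.neighborSet y ∩ {w | G.dist r w = i - 1} ⊆ G.neighborSet x) := by
  obtain ⟨f, hf⟩ := hbip
  have hlevel : ∀ ⦃u v⦄, G.Adj u v → G.dist r v = G.dist r u + 1 ∨ G.dist r u = G.dist r v + 1 :=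
    fun u _ h => (Coloring.mk f fun h => hf _ _ h).dist_eq_add_one_or_of_adj (hconn r u) h
  refine or_iff_not_imp_left.mpr fun hnsub => ?_
  obtain ⟨a, ⟨hxa : G.Adj x a, ha : G.dist r a = i - 1⟩, hya⟩ := Set.not_subset.mp hnsub
  rintro b ⟨hyb : G.Adj y b, hb : G.dist r b = i - 1⟩
  by_contra hxb
  obtain ⟨q, hq, hqc, hqS⟩ :=
    (hconn r a).exists_isPath_isChordless_of_dist_eq (hconn r b) (ha.trans hb.symm)
  have hlen := hcb _ _ (isInducedCycle_of_levels _ hlevel hq hqc hqS hzy.symm hzx hxa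
    hyb.symm hxb hya (by have := hlevel hxa; omega) (ha.trans hb.symm).symm (by omega) (by omega))
  simp only [length_cons, length_concat] at hlen
  exact hya (eq_of_length_eq_zero (by omega : q.length = 0) ▸ hyb)
end

section
/- A vertex ordering σ of a graph G is an LBFS ordering if and only if for all vertices a, b, c with a ≺_σ b ≺_σ c, ac ∈ E(G) and ab ∉ E(G), there exists a vertex d with d ≺_σ a, bd ∈ E(G) and cd ∉ E(G). -/
open Finset

variable {V : Type*} {n : ℕ}

/-- The label of vertex `v` at step `i` of a label search along ordering `σ`:
the set of indices `j < i` such that `σ j` is adjacent to `v`. -/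
def labelF (G : SimpleGraph V) [DecidableRel G.Adj] (σ : Fin n ≃ V)
    (i : Fin n) (v : V) : Finset (Fin n) :=
  Finset.univ.filter (fun j => j < i ∧ G.Adj (σ j) v)

/-- Generic Search label order: `A ≺ B` iff `A = ∅` and `B ≠ ∅`. -/
def gsLt (A B : Finset (Fin n)) : Prop := A = ∅ ∧ B ≠ ∅

/-- BFS label order: `A ≺ B` iff (`A = ∅` and `B ≠ ∅`) or `min A > min B`. -/
def bfsLt (A B : Finset (Fin n)) : Prop := B.min < A.min

/-- LBFS label order: `A ≺ B` iff `A ⊊ B` or `min (A \ B) > min (B \ A)`. -/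
def lbfsLt (A B : Finset (Fin n)) : Prop := (B \ A).min < (A \ B).min

/-- MCS label order: `A ≺ B` iff `|A| < |B|`. -/
def mcsLt (A B : Finset (Fin n)) : Prop := A.card < B.card

/-- MNS label order: `A ≺ B` iff `A ⊊ B`. -/
def mnsLt (A B : Finset (Fin n)) : Prop := A ⊂ B

/-- `σ` is an ordering produced by the label search with label order `lt`:
at each step `i`, the chosen vertex `σ i` has a maximal label among unvisited vertices. -/
def IsSearchOrdering (lt : Finset (Fin n) → Finset (Fin n) → Prop)
    (G : SimpleGraph V) [DecidableRel G.Adj] (σ : Fin n ≃ V) : Prop :=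
  ∀ i j : Fin n, i ≤ j → ¬ lt (labelF G σ i (σ i)) (labelF G σ i (σ j))

/-- A vertex ordering `σ` of `G` is an LBFS ordering iff for all `a ≺ b ≺ c` with
`ac ∈ E(G)` and `ab ∉ E(G)` there is `d ≺ a` with `bd ∈ E(G)` and `cd ∉ E(G)`. -/
theorem lbfs_iff_four_point (G : SimpleGraph V) [DecidableRel G.Adj] (σ : Fin n ≃ V) :
    IsSearchOrdering lbfsLt G σ ↔
      ∀ a b c : Fin n, a < b → b < c → G.Adj (σ a) (σ c) → ¬ G.Adj (σ a) (σ b) →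
        ∃ d : Fin n, d < a ∧ G.Adj (σ b) (σ d) ∧ ¬ G.Adj (σ c) (σ d) := by
  constructor
  · intro h a b c hab hbc hac hnab
    have hb := h b c hbc.le
    simp only [lbfsLt, not_lt] at hb
    set X := labelF G σ b (σ b) with hX
    set Y := labelF G σ b (σ c) with hY
    have haY : a ∈ Y \ X := by
      simp only [hX, hY, labelF, Finset.mem_sdiff, Finset.mem_filter, Finset.mem_univ,
        true_and]
      exact ⟨⟨hab, hac⟩, fun h' => hnab h'.2⟩
    have hmin : (X \ Y).min ≤ (a : WithTop (Fin n)) := hb.trans (Finset.min_le haY)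
    have hne : (X \ Y).Nonempty := by
      rw [Finset.nonempty_iff_ne_empty]
      intro he
      rw [he] at hmin
      simp at hmin
    set d := (X \ Y).min' hne with hd
    have hdmem : d ∈ X \ Y := Finset.min'_mem _ _
    have hda : d ≤ a := by
      have := Finset.coe_min' hne
      rw [← this] at hmin
      exact_mod_cast hmin
    simp only [hX, hY, labelF, Finset.mem_sdiff, Finset.mem_filter, Finset.mem_univ,
      true_and] at hdmem
    obtain ⟨⟨hdb, hdadj⟩, hdnY⟩ := hdmem
    have hdc : ¬ G.Adj (σ d) (σ c) := fun h' => hdnY ⟨hdb, h'⟩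
    have hdlt : d < a := lt_of_le_of_ne hda (fun e => hnab (e ▸ hdadj))
    exact ⟨d, hdlt, hdadj.symm, fun h' => hdc h'.symm⟩
  · intro h i j hij hlt
    simp only [lbfsLt] at hlt
    set X := labelF G σ i (σ i) with hX
    set Y := labelF G σ i (σ j) with hY
    have hne : (Y \ X).Nonempty := by
      rw [Finset.nonempty_iff_ne_empty]
      intro he
      rw [he] at hlt
      simp at hlt
    set a := (Y \ X).min' hne with ha
    have hamem : a ∈ Y \ X := Finset.min'_mem _ _
    have hamin : ((Y \ X).min : WithTop (Fin n)) = (a : WithTop (Fin n)) :=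
      (Finset.coe_min' hne).symm
    simp only [hY, hX, labelF, Finset.mem_sdiff, Finset.mem_filter, Finset.mem_univ,
      true_and] at hamem
    obtain ⟨⟨hai, haj⟩, hanX⟩ := hamem
    have hani : ¬ G.Adj (σ a) (σ i) := fun h' => hanX ⟨hai, h'⟩
    have hijlt : i < j := by
      rcases lt_or_eq_of_le hij with h' | h'
      · exact h'
      · exfalso
        subst h'
        exact hanX ⟨hai, haj⟩
    obtain ⟨d, hda, hdadj, hdc⟩ := h a i j hai hijlt haj hani
    have hdX : d ∈ X \ Y := by
      simp only [hX, hY, labelF, Finset.mem_sdiff, Finset.mem_filter, Finset.mem_univ,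
        true_and]
      exact ⟨⟨hda.trans hai, hdadj.symm⟩, fun h' => hdc h'.2.symm⟩
    have : (X \ Y).min ≤ (d : WithTop (Fin n)) := Finset.min_le hdX
    rw [hamin] at hlt
    have : (a : WithTop (Fin n)) < (d : WithTop (Fin n)) := hlt.trans_le this
    exact absurd hda (not_lt.mpr (le_of_lt (by exact_mod_cast this)))
end

section
/- Let G be a split graph with split partition (C, I) where C is a clique and I an independent set, and let σ be an MNS ordering of G. If x ∈ I is to the left of some vertex of C in σ, then every vertex of C that is to the left of x in σ is a neighbor of x, and every non-neighbor of x to the right of x in σ is to the right of all neighbors of x in σ. -/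
open Finset

variable {V : Type*} {n : ℕ}

lemma mem_labelF {G : SimpleGraph V} [DecidableRel G.Adj] {σ : Fin n ≃ V}
    {i j : Fin n} {v : V} : j ∈ labelF G σ i v ↔ j < i ∧ G.Adj (σ j) v := by
  simp [labelF]

/-- Premature-vertex lemma: in an MNS ordering `σ` of a split graph with clique `C`
and independent set `I`, if `x ∈ I` precedes some vertex of `C` in `σ`, then every
vertex of `C` left of `x` is a neighbor of `x`, and every non-neighbor of `x` right
of `x` is to the right of all neighbors of `x`. -/
theorem mns_premature_vertex (G : SimpleGraph V) [DecidableRel G.Adj] (σ : Fin n ≃ V)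
    (C I : Set V) (hpart : ∀ v : V, (v ∈ C ∧ v ∉ I) ∨ (v ∈ I ∧ v ∉ C))
    (hC : G.IsClique C) (hI : ∀ u ∈ I, ∀ v ∈ I, ¬ G.Adj u v)
    (hσ : IsSearchOrdering mnsLt G σ)
    (x : V) (hx : x ∈ I) (hprem : ∃ c ∈ C, σ.symm x < σ.symm c) :
    (∀ c ∈ C, σ.symm c < σ.symm x → G.Adj c x) ∧
    (∀ w : V, ¬ G.Adj x w → w ≠ x → σ.symm x < σ.symm w →
      ∀ u : V, G.Adj x u → σ.symm u < σ.symm w) := by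
  classical
  obtain ⟨c, hcC, hxc⟩ := hprem
  set i := σ.symm x with hi
  have hσi : σ i = x := by rw [hi]; exact σ.apply_symm_apply x
  have hInbr : ∀ y, G.Adj y x → y ∈ C := by
    intro y hadj
    rcases hpart y with ⟨h1, _⟩ | ⟨h1, _⟩
    · exact h1
    · exact absurd hadj (hI y h1 x hx)
  have hsub : ∀ (m : Fin n) (d : V), d ∈ C → m ≤ σ.symm d →
      labelF G σ m x ⊆ labelF G σ m d := by
    intro m d hdC hmd j hj
    rw [mem_labelF] at hj ⊢
    refine ⟨hj.1, ?_⟩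
    have hjC : σ j ∈ C := hInbr _ hj.2
    have hne : σ j ≠ d := by
      intro h
      have hjd : j = σ.symm d := by rw [← h, σ.symm_apply_apply]
      rw [← hjd] at hmd
      exact absurd hj.1 (not_lt.mpr hmd)
    exact hC hjC hdC hne
  have part1 : ∀ c' ∈ C, σ.symm c' < i → G.Adj c' x := by
    intro c' hc' hlt
    by_contra hadj
    apply hσ i (σ.symm c) hxc.le
    simp only [mnsLt, hσi, σ.apply_symm_apply]
    have hsub' : labelF G σ i x ⊆ labelF G σ i c := hsub i c hcC hxc.le
    refine (Finset.ssubset_iff_of_subset hsub').mpr ⟨σ.symm c', ?_, ?_⟩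
    · rw [mem_labelF, σ.apply_symm_apply]
      refine ⟨hlt, hC hc' hcC ?_⟩
      intro h
      rw [h] at hlt
      exact absurd hxc (not_lt.mpr hlt.le)
    · rw [mem_labelF, σ.apply_symm_apply]
      exact fun h => hadj h.2
  refine ⟨part1, ?_⟩
  by_contra hcon
  push_neg at hcon
  obtain ⟨w0, hw0a, hw0b, hw0c, u0, hu0a, hu0b⟩ := hcon
  set P : Fin n → Prop := fun m =>
    ¬ G.Adj x (σ m) ∧ i < m ∧ ∃ u : V, G.Adj x u ∧ m ≤ σ.symm u with hPdef
  set T : Finset (Fin n) := Finset.univ.filter P with hTdef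
  have hmemT : ∀ j : Fin n, j ∈ T ↔ P j := by
    intro j; simp [hTdef]
  have hTne : T.Nonempty := by
    refine ⟨σ.symm w0, (hmemT _).mpr ?_⟩
    exact ⟨by rwa [σ.apply_symm_apply], hw0c, u0, hu0a, hu0b⟩
  set m := T.min' hTne with hm
  obtain ⟨hmw, him, u, hu, hmu⟩ : P m := (hmemT m).mp (T.min'_mem hTne)
  have huC : u ∈ C := hInbr u hu.symm
  -- subset of labels at step m
  have hsubm : labelF G σ m (σ m) ⊆ labelF G σ m u := by
    intro j hj
    rw [mem_labelF] at hj ⊢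
    obtain ⟨hjm, hjadj⟩ := hj
    refine ⟨hjm, ?_⟩
    have hju : σ j ≠ u := by
      intro h
      have hjd : j = σ.symm u := by rw [← h, σ.symm_apply_apply]
      rw [← hjd] at hmu
      exact absurd hjm (not_lt.mpr hmu)
    rcases hpart (σ j) with ⟨hjC, _⟩ | ⟨hjI, _⟩
    · exact hC hjC huC hju
    · exfalso
      rcases hpart (σ m) with ⟨hwC, _⟩ | ⟨hwI, _⟩
      · rcases lt_trichotomy j i with hji | hji | hji
        · -- j < i : use label equality at step i
          have hmm : i ≤ σ.symm (σ m) := by rw [σ.symm_apply_apply]; exact him.le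
          have h1 : labelF G σ i x ⊆ labelF G σ i (σ m) := hsub i (σ m) hwC hmm
          have h2 : ¬ mnsLt (labelF G σ i (σ i)) (labelF G σ i (σ m)) := hσ i m him.le
          rw [mnsLt, hσi, Finset.ssubset_def] at h2
          push_neg at h2
          have h3 : labelF G σ i (σ m) ⊆ labelF G σ i x := h2 h1
          have hjx : j ∈ labelF G σ i x := h3 (mem_labelF.mpr ⟨hji, hjadj⟩)
          exact hI (σ j) hjI x hx (mem_labelF.mp hjx).2
        · rw [hji, hσi] at hjadj
          exact hmw hjadj
        · -- i < j < m : minimality of m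
          have hPj : P j := ⟨hI x hx (σ j) hjI, hji, u, hu, hjm.le.trans hmu⟩
          have := T.min'_le j ((hmemT j).mpr hPj)
          exact absurd hjm (not_lt.mpr this)
      · exact hI (σ j) hjI (σ m) hwI hjadj
  apply hσ m (σ.symm u) hmu
  simp only [mnsLt, σ.apply_symm_apply]
  rw [Finset.ssubset_def]
  refine ⟨hsubm, fun hrev => ?_⟩
  have hiu : i ∈ labelF G σ m u := mem_labelF.mpr ⟨him, by rw [hσi]; exact hu⟩
  have := mem_labelF.mp (hrev hiu)
  rw [hσi] at this
  exact hmw this.2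
end

section
/- Let G be a graph, ρ a vertex ordering of G, and σ the ordering produced by A⁺(ρ) for A ∈ {GS, BFS, LBFS, MCS, MNS} (ties in A broken by taking the vertex leftmost in ρ). If u ≺_σ v and v ≺_ρ u, then there exists a vertex x with x ≺_σ u, xu ∈ E(G) and xv ∉ E(G). -/
open Finset

variable {V : Type*} {n : ℕ}

/-- At step `i` of the run `σ`, the unvisited vertex `σ j` is eligible:
no unvisited vertex has a strictly larger label. -/
def EligibleAt (lt : Finset (Fin n) → Finset (Fin n) → Prop)
    (G : SimpleGraph V) [DecidableRel G.Adj] (σ : Fin n ≃ V) (i j : Fin n) : Prop :=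
  ∀ k : Fin n, i ≤ k → ¬ lt (labelF G σ i (σ j)) (labelF G σ i (σ k))

/-- `σ` is the run of the label search `lt` with ties broken by taking the eligible
vertex leftmost in `ρ`. -/
def IsPlusOrdering (lt : Finset (Fin n) → Finset (Fin n) → Prop)
    (G : SimpleGraph V) [DecidableRel G.Adj] (ρ σ : Fin n ≃ V) : Prop :=
  IsSearchOrdering lt G σ ∧
    ∀ i j : Fin n, i ≤ j → EligibleAt lt G σ i j → ρ.symm (σ i) ≤ ρ.symm (σ j)

lemma lt_mono_of_mem {lt : Finset (Fin n) → Finset (Fin n) → Prop}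
    (hlt : lt ∈ ({gsLt, bfsLt, lbfsLt, mcsLt, mnsLt} :
      Set (Finset (Fin n) → Finset (Fin n) → Prop)))
    {A B C : Finset (Fin n)} (hAB : A ⊆ B) (h : lt B C) : lt A C := by
  simp only [Set.mem_insert_iff, Set.mem_singleton_iff] at hlt
  rcases hlt with rfl | rfl | rfl | rfl | rfl
  · exact ⟨Finset.subset_empty.mp (h.1 ▸ hAB), h.2⟩
  · exact lt_of_lt_of_le h (Finset.min_mono hAB)
  · exact lt_of_le_of_lt (Finset.min_mono (Finset.sdiff_subset_sdiff le_rfl hAB))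
      (lt_of_lt_of_le h (Finset.min_mono (Finset.sdiff_subset_sdiff hAB le_rfl)))
  · exact lt_of_le_of_lt (Finset.card_le_card hAB) h
  · exact lt_of_le_of_lt hAB h

/-- If `σ = A⁺(ρ)` for `A ∈ {GS, BFS, LBFS, MCS, MNS}`, `u ≺_σ v` and `v ≺_ρ u`,
then there is `x` with `x ≺_σ u`, `xu ∈ E(G)` and `xv ∉ E(G)`. -/
theorem plus_ordering_flip (G : SimpleGraph V) [DecidableRel G.Adj] (ρ σ : Fin n ≃ V)
    (lt : Finset (Fin n) → Finset (Fin n) → Prop)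
    (hlt : lt ∈ ({gsLt, bfsLt, lbfsLt, mcsLt, mnsLt} :
      Set (Finset (Fin n) → Finset (Fin n) → Prop)))
    (hσ : IsPlusOrdering lt G ρ σ) (u v : V)
    (huv : σ.symm u < σ.symm v) (hvu : ρ.symm v < ρ.symm u) :
    ∃ x : V, σ.symm x < σ.symm u ∧ G.Adj x u ∧ ¬ G.Adj x v := by
  by_contra hcon
  push_neg at hcon
  set i := σ.symm u with hi
  set j := σ.symm v with hj
  have hsu : σ i = u := σ.apply_symm_apply u
  have hsv : σ j = v := σ.apply_symm_apply v
  have hsub : labelF G σ i (σ i) ⊆ labelF G σ i (σ j) := by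
    intro k hk
    simp only [labelF, Finset.mem_filter, Finset.mem_univ, true_and] at hk ⊢
    refine ⟨hk.1, ?_⟩
    rw [hsv]
    have := hcon (σ k) (by rw [Equiv.symm_apply_apply]; exact hk.1)
    rw [hsu] at hk
    exact this hk.2
  have helig : EligibleAt lt G σ i j := by
    intro k hik hk
    exact hσ.1 i k hik (lt_mono_of_mem hlt hsub hk)
  have := hσ.2 i j (le_of_lt huv) helig
  rw [hsu, hsv] at this
  exact absurd this (not_le.mpr hvu)
end

section
/- Let A be a connected graph search, G a graph, and T a spanning tree of G rooted at r. Define π as the reflexive transitive closure of the relation R = {(x,y) : x is the parent of y in T, or there is a child z of x in T with yz ∈ E(G)}. Then T is the F-tree of an A-ordering σ of G if and only if π is a partial order and σ extends π. -/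
open Finset

variable {V : Type*} {n : ℕ}

/-- `x` is the parent of `y` in the spanning tree `T` rooted at `r`. -/
def ParentIn (T : SimpleGraph V) (r x y : V) : Prop :=
  T.Adj x y ∧ T.dist r x + 1 = T.dist r y

/-- `T` is the F-tree of the ordering `σ`: each vertex other than the first is
joined to its leftmost neighbor in `σ`. -/
def IsFTreeOf (G : SimpleGraph V) (σ : Fin n ≃ V) (T : SimpleGraph V) : Prop :=
  ∀ x y : V, T.Adj x y ↔
    ((σ.symm x < σ.symm y ∧ G.Adj x y ∧ ∀ z : V, G.Adj z y → σ.symm x ≤ σ.symm z) ∨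
     (σ.symm y < σ.symm x ∧ G.Adj y x ∧ ∀ z : V, G.Adj z x → σ.symm y ≤ σ.symm z))

section AuxTree
open SimpleGraph SimpleGraph.Walk
lemma tree_path_length {T : SimpleGraph V} (hT : T.IsTree) {a b : V}
    (p : T.Walk a b) (hp : p.IsPath) : p.length = T.dist a b := by
  classical
  obtain ⟨w, hw⟩ := hT.isConnected.exists_walk_length_eq_dist a b
  have h1 : p = w.bypass :=
    congrArg Subtype.val (hT.IsAcyclic.path_unique ⟨p, hp⟩ ⟨w.bypass, w.bypass_isPath⟩)
  have h4 : p.length = w.bypass.length := congrArg Walk.length h1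
  have h2 : w.bypass.length ≤ T.dist a b := hw ▸ w.length_bypass_le
  have h3 : T.dist a b ≤ p.length := SimpleGraph.dist_le p
  omega

lemma isPath_concat {T : SimpleGraph V} {a b c : V} {p : T.Walk a b} (hp : p.IsPath)
    (h : T.Adj b c) (hc : c ∉ p.support) : (p.concat h).IsPath := by
  rw [← isPath_reverse_iff, reverse_concat]
  exact hp.reverse.cons (by simpa [support_reverse] using hc)

lemma tree_adj_dist {T : SimpleGraph V} (hT : T.IsTree) (r : V) {x y : V} (h : T.Adj x y) :
    T.dist r x + 1 = T.dist r y ∨ T.dist r y + 1 = T.dist r x := by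
  classical
  obtain ⟨w, hw⟩ := hT.isConnected.exists_walk_length_eq_dist r y
  set q := w.bypass with hq
  have hqp : q.IsPath := w.bypass_isPath
  have hql : q.length = T.dist r y := tree_path_length hT q hqp
  by_cases hx : x ∈ q.support
  · left
    have h1 := tree_path_length hT (q.takeUntil x hx) (hqp.takeUntil hx)
    have h2 := tree_path_length hT (q.dropUntil x hx) (hqp.dropUntil hx)
    have h3 : (q.takeUntil x hx).length + (q.dropUntil x hx).length = q.length := by
      rw [← Walk.length_append, q.take_spec hx]
    have h4 : T.dist x y = 1 := by
      have hpp : (Walk.cons h Walk.nil).IsPath := by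
        simp [Walk.cons_isPath_iff, h.ne]
      have := tree_path_length hT _ hpp
      simpa using this.symm
    omega
  · right
    have hpath : (q.concat h.symm).IsPath := isPath_concat hqp h.symm hx
    have := tree_path_length hT _ hpath
    rw [Walk.length_concat] at this
    omega

lemma tree_exists_parent {T : SimpleGraph V} (hT : T.IsTree) {r v : V} (hv : v ≠ r) :
    ∃ p, T.Adj p v ∧ T.dist r p + 1 = T.dist r v := by
  classical
  obtain ⟨w, hw⟩ := hT.isConnected.exists_walk_length_eq_dist v r
  have key : ∀ (q : T.Walk v r), q.IsPath → q.length = T.dist v r →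
      ∃ p, T.Adj p v ∧ T.dist r p + 1 = T.dist r v := by
    intro q hq hlen
    cases q with
    | nil => exact absurd rfl hv
    | cons hadj q' =>
      rename_i b
      refine ⟨b, hadj.symm, ?_⟩
      have h1 : q'.length = T.dist b r := tree_path_length hT q' hq.of_cons
      have h2 : q'.length + 1 = T.dist v r := by simpa using hlen
      rw [show T.dist r b = T.dist b r from SimpleGraph.dist_comm,
        show T.dist r v = T.dist v r from SimpleGraph.dist_comm]
      omega
  exact key w.bypass w.bypass_isPath
    (le_antisymm (hw ▸ w.length_bypass_le) (SimpleGraph.dist_le _))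

lemma tree_parent_unique {T : SimpleGraph V} (hT : T.IsTree) {r x u v : V}
    (hx : T.Adj x v ∧ T.dist r x + 1 = T.dist r v)
    (hu : T.Adj u v ∧ T.dist r u + 1 = T.dist r v) : x = u := by
  classical
  by_contra hne
  obtain ⟨w, hw⟩ := hT.isConnected.exists_walk_length_eq_dist r x
  set q := w.bypass with hq
  have hqp : q.IsPath := w.bypass_isPath
  have hql : q.length = T.dist r x := tree_path_length hT q hqp
  have hvq : v ∉ q.support := by
    intro hv
    have h1 := tree_path_length hT (q.takeUntil v hv) (hqp.takeUntil hv)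
    have h3 : (q.takeUntil v hv).length + (q.dropUntil v hv).length = q.length := by
      rw [← Walk.length_append, q.take_spec hv]
    omega
  have huq : u ∉ q.support := by
    intro hv
    have h1 := tree_path_length hT (q.takeUntil u hv) (hqp.takeUntil hv)
    have h2 := tree_path_length hT (q.dropUntil u hv) (hqp.dropUntil hv)
    have h3 : (q.takeUntil u hv).length + (q.dropUntil u hv).length = q.length := by
      rw [← Walk.length_append, q.take_spec hv]
    have hdx : 0 < T.dist u x :=
      (hT.isConnected u x).pos_dist_of_ne (fun h : u = x => hne (by rw [h]))
    omega
  have hp1 : (q.concat hx.1).IsPath := isPath_concat hqp hx.1 hvq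
  have hp2 : ((q.concat hx.1).concat hu.1.symm).IsPath := by
    refine isPath_concat hp1 hu.1.symm ?_
    simp only [Walk.support_concat, List.concat_eq_append, List.mem_append, List.mem_singleton]
    rintro (h | h)
    · exact huq h
    · exact hu.1.ne h
  have := tree_path_length hT _ hp2
  rw [Walk.length_concat, Walk.length_concat] at this
  omega
end AuxTree

/-- Let `T` be a spanning tree of `G` rooted at `r`, and let `π` be the reflexive
transitive closure of `R = {(x,y) : x is the parent of y in T, or some child z of x
in T satisfies yz ∈ E(G)}`. For any ordering `σ` of a connected graph search (each
non-first vertex has an earlier neighbor) starting at `r`: `T` is the F-tree of `σ`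
iff `π` is a partial order (i.e. antisymmetric) and `σ` extends `π`. -/
theorem ftree_iff_extends (G T : SimpleGraph V) (hTG : T ≤ G) (hT : T.IsTree)
    (r : V) (hn : 0 < n) (σ : Fin n ≃ V) (hr : σ ⟨0, hn⟩ = r)
    (hGS : ∀ i : Fin n, (⟨0, hn⟩ : Fin n) < i → ∃ j : Fin n, j < i ∧ G.Adj (σ j) (σ i))
    (π : V → V → Prop)
    (hπ : π = Relation.ReflTransGen (fun x y =>
      ParentIn T r x y ∨ ∃ z : V, ParentIn T r x z ∧ G.Adj y z)) :
    IsFTreeOf G σ T ↔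
      ((∀ a b : V, π a b → π b a → a = b) ∧
       ∀ a b : V, π a b → σ.symm a ≤ σ.symm b) := by
    classical
  set i0 : Fin n := ⟨0, hn⟩ with hi0
  have hri : σ.symm r = i0 := by rw [← hr]; simp
  set R : V → V → Prop := fun x y =>
      ParentIn T r x y ∨ ∃ z : V, ParentIn T r x z ∧ G.Adj y z with hRdef
  constructor
  · intro hF
    have keyA : ∀ i : Fin n, ∀ x : V, ParentIn T r x (σ i) → σ.symm x < i := by
      have H : ∀ m : ℕ, ∀ i : Fin n, i.val < m →
          ∀ x, ParentIn T r x (σ i) → σ.symm x < i := by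
        intro m
        induction m with
        | zero => intro i hi; omega
        | succ m IH =>
          intro i hi x hx
          have hx2 := hx.2
          have hvr : σ i ≠ r := by
            intro h
            rw [h, SimpleGraph.dist_self] at hx2
            omega
          have hi0i : i0 < i := by
            rcases lt_or_eq_of_le (show i0 ≤ i from by simp [Fin.le_def, hi0]) with h | h
            · exact h
            · exact absurd (by rw [← h]; exact hr) hvr
          obtain ⟨j, hj, hadj⟩ := hGS i hi0i
          set S : Finset (Fin n) := univ.filter (fun k => G.Adj (σ k) (σ i)) with hS
          have hSne : S.Nonempty := ⟨j, by simp [hS, hadj]⟩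
          set j0 := S.min' hSne with hj0
          have hj0adj : G.Adj (σ j0) (σ i) := by
            have := S.min'_mem hSne
            simpa [hS] using this
          have hj0min : ∀ z : V, G.Adj z (σ i) → j0 ≤ σ.symm z := by
            intro z hz
            apply S.min'_le
            simp [hS, hz]
          have hj0lt : j0 < i := lt_of_le_of_lt (by simpa using hj0min (σ j) hadj) hj
          have hTuv : T.Adj (σ j0) (σ i) := by
            rw [hF]
            left
            exact ⟨by simpa using hj0lt, hj0adj, fun z hz => by simpa using hj0min z hz⟩
          rcases tree_adj_dist hT r hTuv with hp | hp
          · have hxu : x = σ j0 := tree_parent_unique hT hx ⟨hTuv, hp⟩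
            rw [hxu]; simpa using hj0lt
          · have hcon := IH j0 (by
              have := hj0lt
              rw [Fin.lt_def] at this
              omega) (σ i) ⟨hTuv.symm, hp⟩
            rw [Equiv.symm_apply_apply] at hcon
            exact absurd hj0lt (not_lt.mpr (le_of_lt hcon))
      intro i x hx
      exact H (i.val + 1) i (Nat.lt_succ_self _) x hx
    have keyB : ∀ x y : V, R x y → σ.symm x ≤ σ.symm y := by
      intro x y hxy
      rcases hxy with h | ⟨z, hz, hadj⟩
      · exact le_of_lt (by simpa using keyA (σ.symm y) x (by simpa using h))
      · have h1 : σ.symm x < σ.symm z := by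
          simpa using keyA (σ.symm z) x (by simpa using hz)
        rcases (hF x z).mp hz.1 with ⟨_, _, hmin⟩ | ⟨hlt, _, _⟩
        · exact hmin y hadj
        · exact absurd h1 (not_lt.mpr (le_of_lt hlt))
    have hext : ∀ a b : V, π a b → σ.symm a ≤ σ.symm b := by
      intro a b hab
      rw [hπ] at hab
      induction hab with
      | refl => exact le_refl _
      | tail h1 h2 ih => exact le_trans ih (keyB _ _ h2)
    exact ⟨fun a b hab hba =>
      σ.symm.injective (le_antisymm (hext a b hab) (hext b a hba)), hext⟩
  · rintro ⟨-, hext⟩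
    have hbase : ∀ x y : V, R x y → σ.symm x ≤ σ.symm y := by
      intro x y h
      exact hext x y (by rw [hπ]; exact Relation.ReflTransGen.single h)
    intro x y
    constructor
    · intro hxy
      have hG := hTG hxy
      rcases lt_trichotomy (σ.symm x) (σ.symm y) with hlt | heq | hlt
      · left
        rcases tree_adj_dist hT r hxy with hp | hp
        · exact ⟨hlt, hG, fun z hz => hbase x z (Or.inr ⟨y, ⟨hxy, hp⟩, hz⟩)⟩
        · exact absurd (hbase y x (Or.inl ⟨hxy.symm, hp⟩)) (not_le.mpr hlt)
      · exact absurd (σ.symm.injective heq) hxy.ne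
      · right
        rcases tree_adj_dist hT r hxy with hp | hp
        · exact absurd (hbase x y (Or.inl ⟨hxy, hp⟩)) (not_le.mpr hlt)
        · exact ⟨hlt, hG.symm, fun z hz => hbase y z (Or.inr ⟨x, ⟨hxy.symm, hp⟩, hz⟩)⟩
    · rintro (⟨hlt, hadj, hmin⟩ | ⟨hlt, hadj, hmin⟩)
      · have hyr : y ≠ r := by
          intro h
          rw [h, hri] at hlt
          rw [Fin.lt_def] at hlt
          simp [hi0] at hlt
        obtain ⟨p, hp1, hp2⟩ := tree_exists_parent hT hyr
        have h1 : σ.symm p ≤ σ.symm x := hbase p x (Or.inr ⟨y, ⟨hp1, hp2⟩, hadj⟩)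
        have h2 : σ.symm x ≤ σ.symm p := hmin p (hTG hp1)
        have hxp : x = p := σ.symm.injective (le_antisymm h2 h1)
        rw [hxp]; exact hp1
      · have hxr : x ≠ r := by
          intro h
          rw [h, hri] at hlt
          rw [Fin.lt_def] at hlt
          simp [hi0] at hlt
        obtain ⟨p, hp1, hp2⟩ := tree_exists_parent hT hxr
        have h1 : σ.symm p ≤ σ.symm y := hbase p y (Or.inr ⟨x, ⟨hp1, hp2⟩, hadj⟩)
        have h2 : σ.symm y ≤ σ.symm p := hmin p (hTG hp1)
        have hyp : y = p := σ.symm.injective (le_antisymm h2 h1)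
        rw [hyp]; exact hp1.symm
end

section
/- Let G be a bipartite graph, T a spanning tree of G rooted at r, and define π as the reflexive transitive closure of the relation containing (x,y) for each edge xy of T with x the parent of y, and (z,x) for each vertex y ≠ r with parent x in T and each neighbor z of y lying in the same BFS layer as x. Then any BFS ordering σ of G starting at r that extends π has T as its L-tree. -/
open Finset

variable {V : Type*} {n : ℕ}

/-- `T` is the L-tree of the ordering `σ`: each vertex other than the first is
joined to its rightmost neighbor preceding it in `σ`. -/
def IsLTreeOf (G : SimpleGraph V) (σ : Fin n ≃ V) (T : SimpleGraph V) : Prop :=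
  ∀ x y : V, T.Adj x y ↔
    ((σ.symm x < σ.symm y ∧ G.Adj x y ∧
        ∀ z : V, G.Adj z y → σ.symm z < σ.symm y → σ.symm z ≤ σ.symm x) ∨
     (σ.symm y < σ.symm x ∧ G.Adj y x ∧
        ∀ z : V, G.Adj z x → σ.symm z < σ.symm x → σ.symm z ≤ σ.symm y))

lemma aux_flip (P : ℕ → Prop) (h0 : P 0) {m : ℕ} (hm : ¬ P m) :
    ∃ t, P t ∧ ¬ P (t+1) := by
  by_contra h
  push_neg at h
  have hall : ∀ t, P t := by
    intro t
    induction t with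
    | zero => exact h0
    | succ t ih => exact h t ih
  exact hm (hall m)

lemma aux_walk_parity {G : SimpleGraph V} {f : V → Bool}
    (hf : ∀ u v : V, G.Adj u v → f u ≠ f v) {u v : V} (W : G.Walk u v) :
    (f u = f v) ↔ Even W.length := by
  induction W with
  | nil => simp
  | @cons a b c h p ih =>
    have hne := hf a b h
    simp only [SimpleGraph.Walk.length_cons, Nat.even_add_one, ← ih]
    cases hab : f a <;> cases hbb : f b <;> cases hcc : f c <;> simp_all

lemma aux_dist_adj_le {G : SimpleGraph V} (hc : G.Connected) {r a b : V} (h : G.Adj a b) :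
    G.dist r b ≤ G.dist r a + 1 := by
  have h1 : G.dist a b = 1 := SimpleGraph.dist_eq_one_iff_adj.mpr h
  have h2 := hc.dist_triangle (u := r) (v := a) (w := b)
  omega

lemma aux_dist_getVert_le {G : SimpleGraph V} (hc : G.Connected) {u v : V}
    (W : G.Walk u v) (t : ℕ) : G.dist u (W.getVert t) ≤ t := by
  induction t with
  | zero => simp [W.getVert_zero, SimpleGraph.dist_self]
  | succ t ih =>
    by_cases ht : t < W.length
    · have hadj := W.adj_getVert_succ ht
      have := aux_dist_adj_le hc hadj (r := u)
      omega
    · have e1 := W.getVert_of_length_le (show W.length ≤ t by omega)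
      have e2 := W.getVert_of_length_le (show W.length ≤ t + 1 by omega)
      rw [e2, ← e1]
      exact ih.trans (Nat.le_succ t)

lemma aux_adj_dist {G : SimpleGraph V} (hc : G.Connected)
    {f : V → Bool} (hf : ∀ u v : V, G.Adj u v → f u ≠ f v)
    (r : V) {u v : V} (h : G.Adj u v) :
    G.dist r v = G.dist r u + 1 ∨ G.dist r u = G.dist r v + 1 := by
  obtain ⟨Wu, hWu⟩ := hc.exists_walk_length_eq_dist r u
  obtain ⟨Wv, hWv⟩ := hc.exists_walk_length_eq_dist r v
  have h1 : G.dist r v ≤ G.dist r u + 1 := by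
    have := SimpleGraph.dist_le (Wu.concat h)
    rwa [SimpleGraph.Walk.length_concat, hWu] at this
  have h2 : G.dist r u ≤ G.dist r v + 1 := by
    have := SimpleGraph.dist_le (Wv.concat h.symm)
    rwa [SimpleGraph.Walk.length_concat, hWv] at this
  have p1 : (f r = f u) ↔ Even (G.dist r u) := by
    rw [← hWu]; exact aux_walk_parity hf Wu
  have p2 : (f r = f v) ↔ Even (G.dist r v) := by
    rw [← hWv]; exact aux_walk_parity hf Wv
  have hne : G.dist r u ≠ G.dist r v := by
    intro he
    have hfuv := hf u v h
    rw [he, ← p2] at p1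
    cases hru : f r <;> cases hu : f u <;> cases hv : f v <;> simp_all
  omega

lemma aux_label_min {G : SimpleGraph V} [DecidableRel G.Adj] {σ : Fin n ≃ V}
    (hσ : IsSearchOrdering bfsLt G σ) {i j : Fin n} (hij : i ≤ j)
    {c : Fin n} (hc : c ∈ labelF G σ i (σ j)) :
    ∃ m, m ∈ labelF G σ i (σ i) ∧ m ≤ c := by
  have h := hσ i j hij
  unfold bfsLt at h
  push_neg at h
  have h2 : (labelF G σ i (σ j)).min ≤ (c : WithTop (Fin n)) := Finset.min_le hc
  have h3 : (labelF G σ i (σ i)).min ≤ (c : WithTop (Fin n)) := le_trans h h2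
  have hne : (labelF G σ i (σ i)).Nonempty := by
    rw [Finset.nonempty_iff_ne_empty]
    intro he
    rw [he, Finset.min_empty] at h3
    exact absurd (top_le_iff.mp h3) (by simp)
  refine ⟨(labelF G σ i (σ i)).min' hne, Finset.min'_mem _ _, ?_⟩
  have h4 := Finset.coe_min' hne
  rw [← h4] at h3
  exact_mod_cast h3

lemma aux_bfs_mono {G : SimpleGraph V} [DecidableRel G.Adj] (hc : G.Connected)
    (hn : 0 < n) (σ : Fin n ≃ V) {r : V} (hr : σ ⟨0, hn⟩ = r)
    (hσ : IsSearchOrdering bfsLt G σ) :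
    ∀ j k : Fin n, k ≤ j → G.dist r (σ k) ≤ G.dist r (σ j) := by
  suffices H : ∀ jn : ℕ, ∀ (hj : jn < n), ∀ k : Fin n, (k : ℕ) ≤ jn →
      G.dist r (σ k) ≤ G.dist r (σ ⟨jn, hj⟩) by
    intro j k hk
    exact H j j.isLt k hk
  intro jn
  induction jn using Nat.strong_induction_on with
  | _ jn IH =>
    intro hj k hk
    set j : Fin n := ⟨jn, hj⟩ with hjdef
    rcases eq_or_lt_of_le hk with he | hlt
    · have hkj : k = j := Fin.ext he
      rw [hkj]
    · have hj0 : 0 < jn := lt_of_le_of_lt (Nat.zero_le _) hlt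
      have hrj : σ j ≠ r := by
        intro he
        have h0 : j = ⟨0, hn⟩ := σ.injective (by rw [he, hr])
        have := congrArg Fin.val h0
        simp only [hjdef] at this
        omega
      obtain ⟨W, hW⟩ := (hc r (σ j)).exists_walk_length_eq_dist
      have hdp : 0 < G.dist r (σ j) := (hc r (σ j)).pos_dist_of_ne (fun he => hrj he.symm)
      have hP0 : (σ.symm (W.getVert 0) : ℕ) < jn := by
        rw [W.getVert_zero]
        have h0 : σ.symm r = ⟨0, hn⟩ := by rw [← hr]; simp
        rw [h0]
        exact hj0
      have hPlen : ¬ (σ.symm (W.getVert W.length) : ℕ) < jn := by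
        rw [W.getVert_length, Equiv.symm_apply_apply]
        exact lt_irrefl jn
      obtain ⟨t, hPt, hPt1⟩ := aux_flip (fun t => (σ.symm (W.getVert t) : ℕ) < jn) hP0 hPlen
      have htlen : t < W.length := by
        by_contra hcon
        rw [W.getVert_of_length_le (le_of_not_gt hcon), Equiv.symm_apply_apply] at hPt
        exact lt_irrefl jn hPt
      have hadj : G.Adj (W.getVert t) (W.getVert (t+1)) := W.adj_getVert_succ htlen
      set c : Fin n := σ.symm (W.getVert t) with hcdef
      have hcj : c < j := hPt
      have hju : j ≤ σ.symm (W.getVert (t+1)) := le_of_not_gt hPt1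
      have hcmem : c ∈ labelF G σ j (σ (σ.symm (W.getVert (t+1)))) := by
        simp only [labelF, Finset.mem_filter, Finset.mem_univ, true_and]
        refine ⟨hcj, ?_⟩
        simpa [hcdef] using hadj
      obtain ⟨m, hm, hmc⟩ := aux_label_min hσ hju hcmem
      simp only [labelF, Finset.mem_filter, Finset.mem_univ, true_and] at hm
      obtain ⟨hmj, hmadj⟩ := hm
      have hDc : G.dist r (σ c) ≤ t := by
        rw [hcdef, Equiv.apply_symm_apply]
        exact aux_dist_getVert_le hc W t
      have htD : t + 1 ≤ G.dist r (σ j) := by rw [← hW]; omega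
      have hDmc : G.dist r (σ m) ≤ G.dist r (σ c) := IH (c : ℕ) hPt c.isLt m hmc
      rcases le_or_gt (k : ℕ) (m : ℕ) with hkm | hkm
      · have h1 : G.dist r (σ k) ≤ G.dist r (σ m) := IH (m : ℕ) hmj m.isLt k hkm
        omega
      · have hmemk : m ∈ labelF G σ k (σ j) := by
          simp only [labelF, Finset.mem_filter, Finset.mem_univ, true_and]
          exact ⟨hkm, hmadj⟩
        obtain ⟨m', hm', hm'm⟩ := aux_label_min hσ (le_of_lt hlt) hmemk
        simp only [labelF, Finset.mem_filter, Finset.mem_univ, true_and] at hm'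
        have h1 : G.dist r (σ k) ≤ G.dist r (σ m') + 1 := aux_dist_adj_le hc hm'.2
        have h2 : G.dist r (σ m') ≤ G.dist r (σ m) := IH (m : ℕ) hmj m.isLt m' hm'm
        omega

/-- Let `G` be bipartite, `T` a spanning tree rooted at `r`, and `π` the reflexive
transitive closure of the relation containing `(x,y)` for each parent-child pair of
`T` and `(z,x)` for each vertex `y ≠ r` with parent `x` and each neighbor `z` of `y`
in the same BFS layer as `x`. Then every BFS ordering of `G` starting at `r` that
extends `π` has `T` as its L-tree. -/
theorem bfs_ltree_extends (G T : SimpleGraph V) [DecidableRel G.Adj]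
    (hbip : ∃ f : V → Bool, ∀ u v : V, G.Adj u v → f u ≠ f v)
    (hTG : T ≤ G) (hT : T.IsTree) (r : V)
    (π : V → V → Prop)
    (hπ : π = Relation.ReflTransGen (fun u v =>
      ParentIn T r u v ∨
        ∃ y : V, y ≠ r ∧ ParentIn T r v y ∧ G.Adj u y ∧ G.dist r u = G.dist r v))
    (hn : 0 < n) (σ : Fin n ≃ V) (hr : σ ⟨0, hn⟩ = r)
    (hσ : IsSearchOrdering bfsLt G σ)
    (hext : ∀ u v : V, π u v → σ.symm u ≤ σ.symm v) :
    IsLTreeOf G σ T := by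
  subst hπ
  obtain ⟨f, hf⟩ := hbip
  have hTc : T.Connected := hT.isConnected
  have hGc : G.Connected := hTc.mono hTG
  have hfT : ∀ u v : V, T.Adj u v → f u ≠ f v := fun u v h => hf u v (hTG h)
  have hmono := aux_bfs_mono hGc hn σ hr hσ
  have hposmono : ∀ u v : V, σ.symm u ≤ σ.symm v → G.dist r u ≤ G.dist r v := by
    intro u v h
    have := hmono (σ.symm v) (σ.symm u) h
    simpa using this
  have hparent : ∀ y : V, y ≠ r → ∃ w, ParentIn T r w y := by
    intro y hy
    have hd : 0 < T.dist r y := (hTc r y).pos_dist_of_ne (fun he => hy he.symm)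
    obtain ⟨W, hW⟩ := (hTc r y).exists_walk_length_eq_dist
    have hlt : T.dist r y - 1 < W.length := by omega
    have hadj := W.adj_getVert_succ hlt
    have he : T.dist r y - 1 + 1 = W.length := by omega
    rw [he, W.getVert_length] at hadj
    have h1 : T.dist r (W.getVert (T.dist r y - 1)) ≤ T.dist r y - 1 :=
      aux_dist_getVert_le hTc W _
    have h2 : T.dist r y ≤ T.dist r (W.getVert (T.dist r y - 1)) + 1 :=
      aux_dist_adj_le hTc hadj
    exact ⟨W.getVert (T.dist r y - 1), hadj, by omega⟩
  have hdistkey : ∀ d : ℕ, ∀ y : V, T.dist r y = d → G.dist r y = d := by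
    intro d
    induction d with
    | zero =>
      intro y h
      have h0 : r = y := (hTc.dist_eq_zero_iff).mp h
      subst h0
      exact SimpleGraph.dist_self
    | succ d IHd =>
      intro y h
      have hy : y ≠ r := by
        intro he
        subst he
        rw [SimpleGraph.dist_self] at h
        exact absurd h (by omega)
      obtain ⟨w, hw⟩ := hparent y hy
      have hwd : T.dist r w = d := by have := hw.2; omega
      have hGw : G.dist r w = d := IHd w hwd
      have hle : G.dist r w ≤ G.dist r y :=
        hposmono w y (hext w y (Relation.ReflTransGen.single (Or.inl hw)))
      rcases aux_adj_dist hGc hf r (hTG hw.1) with h1 | h1 <;> omega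
  have hdist : ∀ y : V, G.dist r y = T.dist r y := fun y => hdistkey _ y rfl
  have hkey : ∀ x y : V, ParentIn T r x y →
      σ.symm x < σ.symm y ∧ G.Adj x y ∧
        ∀ z : V, G.Adj z y → σ.symm z < σ.symm y → σ.symm z ≤ σ.symm x := by
    intro x y hp
    have hle : σ.symm x ≤ σ.symm y := hext x y (Relation.ReflTransGen.single (Or.inl hp))
    have hlt : σ.symm x < σ.symm y :=
      lt_of_le_of_ne hle (fun he => hp.1.ne (σ.symm.injective he))
    have hyr : y ≠ r := by
      intro he
      have h2 := hp.2
      rw [he, SimpleGraph.dist_self] at h2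
      omega
    refine ⟨hlt, hTG hp.1, ?_⟩
    intro z hz hzy
    have h1 : G.dist r z ≤ G.dist r y := hposmono z y (le_of_lt hzy)
    have h3 : G.dist r z = G.dist r x := by
      have e1 := hdist x
      have e2 := hdist y
      have e3 := hp.2
      rcases aux_adj_dist hGc hf r hz with h4 | h4 <;> omega
    exact hext z x (Relation.ReflTransGen.single (Or.inr ⟨y, hyr, hp, hz, h3⟩))
  unfold IsLTreeOf
  intro x y
  constructor
  · intro h
    rcases aux_adj_dist hTc hfT r h with h1 | h1
    · exact Or.inl (hkey x y ⟨h, h1.symm⟩)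
    · exact Or.inr (hkey y x ⟨h.symm, h1.symm⟩)
  · rintro (⟨hlt, hadj, hmax⟩ | ⟨hlt, hadj, hmax⟩)
    · have hyr : y ≠ r := by
        intro he
        have h0 : σ.symm y = ⟨0, hn⟩ := by rw [he, ← hr]; simp
        rw [h0] at hlt
        exact absurd hlt (by simp [Fin.lt_def])
      obtain ⟨w, hw⟩ := hparent y hyr
      obtain ⟨hwlt, hwadj, hwmax⟩ := hkey w y hw
      have h1 : σ.symm x ≤ σ.symm w := hwmax x hadj hlt
      have h2 : σ.symm w ≤ σ.symm x := hmax w hwadj hwlt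
      have hwx : w = x := σ.symm.injective (le_antisymm h2 h1)
      rw [← hwx]
      exact hw.1
    · have hxr : x ≠ r := by
        intro he
        have h0 : σ.symm x = ⟨0, hn⟩ := by rw [he, ← hr]; simp
        rw [h0] at hlt
        exact absurd hlt (by simp [Fin.lt_def])
      obtain ⟨w, hw⟩ := hparent x hxr
      obtain ⟨hwlt, hwadj, hwmax⟩ := hkey w x hw
      have h1 : σ.symm y ≤ σ.symm w := hwmax y hadj hlt
      have h2 : σ.symm w ≤ σ.symm y := hmax w hwadj hwlt
      have hwy : w = y := σ.symm.injective (le_antisymm h2 h1)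
      rw [← hwy]
      exact (hw.1).symm
end

section
/- The greedy algorithm for Generic Search with a partial order is correct: given a connected graph G, a start vertex r, and a partial order π on V(G) with r minimal in π, there exists a Generic Search ordering of G starting at r that is a linear extension of π if and only if the following process visits all vertices: start with S = {r}; repeatedly remove any v from S, append it to the ordering, delete v from π, mark all neighbors of v, and add to S every marked vertex that is currently minimal in the remaining restriction of π to unvisited vertices. -/
/-!
A search ordering `L` extending `π` certifies that no greedy run gets stuck early: the first
vertex of `L` that the run has not visited is eligible, because its earlier neighbour and all its
`π`-predecessors come before it in `L` and so have been visited. Conversely, a maximal greedy run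
that visits every vertex is itself such an ordering, since a vertex is appended only once it is
marked and `π`-minimal among the unvisited vertices.
-/

variable {V : Type*}

/-- `v` is eligible w.r.t. the set `P` of visited vertices: `v` is unvisited, marked
(has a visited neighbor), and minimal in the restriction of `π` to unvisited vertices. -/
def GreedyEligible [DecidableEq V] (G : SimpleGraph V) (π : V → V → Prop)
    (P : Finset V) (v : V) : Prop :=
  v ∉ P ∧ (∃ u ∈ P, G.Adj u v) ∧ ∀ w : V, π w v → w ≠ v → w ∈ P

/-- A run of the greedy algorithm: a duplicate-free list starting at `r` in which
every subsequent vertex is eligible w.r.t. the preceding prefix. -/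
def GreedyRun [DecidableEq V] (G : SimpleGraph V) (π : V → V → Prop) (r : V)
    (l : List V) : Prop :=
  l.head? = some r ∧ l.Nodup ∧
    ∀ (i : ℕ) (h : i + 1 < l.length),
      GreedyEligible G π ((l.take (i + 1)).toFinset) (l.get ⟨i + 1, h⟩)

theorem List.idxOf_lt_iff_mem_take {α : Type*} [DecidableEq α] {l : List α} {x : α}
    (hx : x ∈ l) {k : ℕ} : l.idxOf x < k ↔ x ∈ l.take k := by
  constructor
  · intro hk
    have hlt := List.idxOf_lt_length_iff.2 hx
    exact List.mem_take_iff_getElem.2 ⟨l.idxOf x, by omega, List.getElem_idxOf hlt⟩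
  · intro hxk
    have hlt := List.idxOf_lt_length_iff.2 hxk
    rw [← List.take_append_drop k l, List.idxOf_append_of_mem hxk]
    simp only [List.length_take] at hlt
    omega

def IsSearchOrder (G : SimpleGraph V) (l : List V) : Prop :=
  ∀ (i : ℕ) (h : i + 1 < l.length),
    ∃ (j : ℕ) (hj : j ≤ i),
      G.Adj (l.get ⟨j, hj.trans_lt (Nat.lt_of_succ_lt h)⟩) (l.get ⟨i + 1, h⟩)

theorem isSearchOrder_iff {G : SimpleGraph V} {l : List V} :
    IsSearchOrder G l ↔
      ∀ (i : ℕ) (h : i + 1 < l.length), ∃ u ∈ l.take (i + 1), G.Adj u l[i + 1] := by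
  refine forall₂_congr fun i h => ⟨?_, ?_⟩
  · rintro ⟨j, hj, hadj⟩
    exact ⟨l[j], List.mem_take_iff_getElem.2 ⟨j, by omega, rfl⟩, hadj⟩
  · rintro ⟨u, hu, hadj⟩
    obtain ⟨j, hj, rfl⟩ := List.mem_take_iff_getElem.1 hu
    exact ⟨j, by omega, hadj⟩

def ExtendsOrder [DecidableEq V] (π : V → V → Prop) (l : List V) : Prop :=
  ∀ x y : V, π x y → x ≠ y → l.idxOf x < l.idxOf y

section

variable [DecidableEq V] {G : SimpleGraph V} {π : V → V → Prop} {r : V} {l : List V}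

theorem GreedyRun.head_mem (hl : GreedyRun G π r l) : r ∈ l :=
  List.mem_of_mem_head? hl.1

theorem GreedyRun.isSearchOrder (hl : GreedyRun G π r l) : IsSearchOrder G l :=
  isSearchOrder_iff.2 fun i h => by
    obtain ⟨-, ⟨u, hu, hadj⟩, -⟩ := hl.2.2 i h
    exact ⟨u, List.mem_toFinset.1 hu, hadj⟩

theorem GreedyRun.idxOf_lt_idxOf (hl : GreedyRun G π r l) (hr : ∀ w : V, π w r → w = r)
    {x y : V} (hy : y ∈ l) (hxy : π x y) (hne : x ≠ y) : l.idxOf x < l.idxOf y := by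
  obtain ⟨t, rfl⟩ := List.head?_eq_some_iff.1 hl.1
  have hyr : y ≠ r := by rintro rfl; exact hne (hr x hxy)
  obtain ⟨i, hi⟩ : ∃ i, (r :: t).idxOf y = i + 1 := by simp [Ne.symm hyr]
  have hlt : i + 1 < (r :: t).length := hi ▸ List.idxOf_lt_length_iff.2 hy
  obtain ⟨-, -, hmin⟩ := hl.2.2 i hlt
  have hget : (r :: t).get ⟨i + 1, hlt⟩ = y := by
    simp only [List.get_eq_getElem, ← hi, List.getElem_idxOf]
  have hx := List.mem_toFinset.1 (hmin x (hget ▸ hxy) (hget ▸ hne))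
  rw [hi]
  exact (List.idxOf_lt_iff_mem_take (List.mem_of_mem_take hx)).2 hx

theorem GreedyRun.append (hl : GreedyRun G π r l) {v : V} (hv : GreedyEligible G π l.toFinset v) :
    GreedyRun G π r (l ++ [v]) := by
  obtain ⟨hhead, hnd, helig⟩ := hl
  refine ⟨?_, ?_, fun i h => ?_⟩
  · obtain ⟨t, rfl⟩ := List.head?_eq_some_iff.1 hhead
    rfl
  · exact hnd.append (List.nodup_singleton v)
      (List.disjoint_singleton.2 fun hvl => hv.1 (List.mem_toFinset.2 hvl))
  · simp only [List.length_append, List.length_singleton] at h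
    rcases Nat.lt_or_eq_of_le (Nat.le_of_lt_succ h) with h | h
    · simpa [List.take_append_of_le_length (show i + 1 ≤ l.length by omega),
        List.getElem_append_left h] using helig i h
    · simpa [← h] using hv

variable (G π r) in
theorem exists_maximal_greedyRun [Fintype V] :
    ∃ l, GreedyRun G π r l ∧ ∀ v, ¬ GreedyEligible G π l.toFinset v := by
  by_contra! hext
  have hlong : ∀ n : ℕ, ∃ l, GreedyRun G π r l ∧ n < l.length := by
    intro n
    induction n with
    | zero => exact ⟨[r], ⟨rfl, List.nodup_singleton r, fun i h => by simp at h⟩, by simp⟩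
    | succ n ih =>
      obtain ⟨l, hl, hn⟩ := ih
      obtain ⟨v, hv⟩ := hext l hl
      exact ⟨l ++ [v], hl.append hv, by simpa using hn⟩
  obtain ⟨l, hl, hcard⟩ := hlong (Fintype.card V)
  exact absurd hl.2.1.length_le_card (by omega)

theorem exists_greedyEligible_of_extendsOrder {L : List V} {P : Finset V}
    (hL : L.head? = some r) (hnd : L.Nodup) (hs : IsSearchOrder G L) (he : ExtendsOrder π L)
    (hrP : r ∈ P) (hout : ∃ v ∈ L, v ∉ P) : ∃ m, GreedyEligible G π P m := by
  have hex : ∃ k, ∃ h : k < L.length, L[k] ∉ P := by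
    obtain ⟨v, hv, hvP⟩ := hout
    obtain ⟨k, hk, rfl⟩ := List.getElem_of_mem hv
    exact ⟨k, hk, hvP⟩
  obtain ⟨hk, hkP⟩ := Nat.find_spec hex
  set k := Nat.find hex
  have hprefix : ∀ u ∈ L.take k, u ∈ P := by
    intro u hu
    obtain ⟨j, hj, rfl⟩ := List.mem_take_iff_getElem.1 hu
    by_contra hjP
    exact Nat.find_min hex (lt_of_lt_of_le hj (min_le_left _ _)) ⟨_, hjP⟩
  obtain ⟨i, hi⟩ : ∃ i, k = i + 1 := by
    refine Nat.exists_eq_add_one_of_ne_zero fun hk0 => ?_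
    obtain ⟨_, h0P⟩ := (Nat.find_eq_zero hex).1 hk0
    obtain ⟨t, rfl⟩ := List.head?_eq_some_iff.1 hL
    exact h0P hrP
  refine ⟨L[k], hkP, ?_, fun w hw hne => hprefix w ?_⟩
  · obtain ⟨u, hu, hadj⟩ := isSearchOrder_iff.1 hs i (hi ▸ hk)
    exact ⟨u, hprefix u (hi ▸ hu), by simpa [hi] using hadj⟩
  · have hwk : L.idxOf w < k := hnd.idxOf_getElem k hk ▸ he w L[k] hw hne
    exact (List.idxOf_lt_iff_mem_take (List.idxOf_lt_length_iff.1 (by omega))).1 hwk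

end

/-- Correctness of the greedy algorithm for the PSOP of Generic Search: there is a
Generic Search ordering of `G` starting at `r` extending `π` iff every maximal
greedy run visits all vertices. -/
theorem greedy_generic_search_correct [Fintype V] [DecidableEq V]
    (G : SimpleGraph V) (r : V)
    (π : V → V → Prop)
    (hr : ∀ w : V, π w r → w = r) :
    (∃ l : List V, l.head? = some r ∧ l.Nodup ∧ (∀ v : V, v ∈ l) ∧
        (∀ (i : ℕ) (h : i + 1 < l.length),
          ∃ (j : ℕ) (hj : j ≤ i), G.Adj (l.get ⟨j, by omega⟩) (l.get ⟨i + 1, h⟩)) ∧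
        (∀ x y : V, π x y → x ≠ y → l.idxOf x < l.idxOf y)) ↔
      (∀ l : List V, GreedyRun G π r l →
        (∀ v : V, ¬ GreedyEligible G π l.toFinset v) → ∀ v : V, v ∈ l) := by
  constructor
  · rintro ⟨L, hL, hnd, hcov, hs, he⟩ l hl hmax v
    by_contra hv
    obtain ⟨m, hm⟩ := exists_greedyEligible_of_extendsOrder hL hnd hs he
      (List.mem_toFinset.2 hl.head_mem) ⟨v, hcov v, by simpa using hv⟩
    exact hmax m hm
  · intro H
    obtain ⟨l, hl, hmax⟩ := exists_maximal_greedyRun G π r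
    have hcov := H l hl hmax
    exact ⟨l, hl.1, hl.2.1, hcov, hl.isSearchOrder,
      fun x y hxy hne => hl.idxOf_lt_idxOf hr (hcov y) hxy hne⟩
end

section
/- Let G be a split graph with split partition (C, I), π a partial order on V(G), and A = {v ∈ I : there exists w ∈ C with v ≺_π w}. If there is an MNS ordering σ of G extending π, then the neighborhoods of the elements of A can be linearly ordered by inclusion, i.e., for any x, y ∈ A, N(x) ⊆ N(y) or N(y) ⊆ N(x). -/
open Finset

variable {V : Type*} {n : ℕ}

/-- If there is an MNS ordering of a split graph extending `π`, then the neighborhoods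
of the premature vertices `A = {v ∈ I : ∃ w ∈ C, v ≺_π w}` are linearly ordered by
inclusion. -/
theorem mns_extension_nested (G : SimpleGraph V) [DecidableRel G.Adj]
    (C I : Set V) (hpart : ∀ v : V, (v ∈ C ∧ v ∉ I) ∨ (v ∈ I ∧ v ∉ C))
    (hC : G.IsClique C) (hI : ∀ u ∈ I, ∀ v ∈ I, ¬ G.Adj u v)
    (π : V → V → Prop) (hπ : IsPartialOrder V π)
    (A : Set V) (hA : A = {v | v ∈ I ∧ ∃ w ∈ C, π v w ∧ v ≠ w})
    (hex : ∃ σ : Fin n ≃ V, IsSearchOrdering mnsLt G σ ∧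
      ∀ u v : V, π u v → u ≠ v → σ.symm u < σ.symm v) :
    ∀ x ∈ A, ∀ y ∈ A,
      G.neighborSet x ⊆ G.neighborSet y ∨ G.neighborSet y ⊆ G.neighborSet x := by
  obtain ⟨σ, hσ, hext⟩ := hex
  subst hA
  -- claim: every clique vertex visited before a premature I-vertex is adjacent to it
  have claim : ∀ v ∈ I, ∀ w ∈ C, π v w → v ≠ w →
      ∀ c ∈ C, σ.symm c < σ.symm v → G.Adj c v := by
    intro v hvI w hwC hπvw hvw c hcC hcv
    have hiw : σ.symm v < σ.symm w := hext v w hπvw hvw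
    have hns := hσ (σ.symm v) (σ.symm w) (le_of_lt hiw)
    rw [Equiv.apply_symm_apply, Equiv.apply_symm_apply] at hns
    have hsub : labelF G σ (σ.symm v) v ⊆ labelF G σ (σ.symm v) w := by
      intro k hk
      simp only [labelF, Finset.mem_filter, Finset.mem_univ, true_and] at hk ⊢
      obtain ⟨hki, hadj⟩ := hk
      have hskC : σ k ∈ C := by
        rcases hpart (σ k) with h | h
        · exact h.1
        · exact absurd hadj (hI (σ k) h.1 v hvI)
      have hne : σ k ≠ w := by
        intro h
        have hk' : k = σ.symm w := by rw [← h]; simp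
        rw [hk'] at hki
        exact absurd (hki.trans hiw) (lt_irrefl _)
      exact ⟨hki, hC hskC hwC hne⟩
    have heq : labelF G σ (σ.symm v) v = labelF G σ (σ.symm v) w := by
      by_contra hne
      exact hns (HasSubset.Subset.ssubset_of_ne hsub hne)
    have hcw : c ≠ w := by
      intro h; rw [h] at hcv
      exact absurd (hcv.trans hiw) (lt_irrefl _)
    have : σ.symm c ∈ labelF G σ (σ.symm v) w := by
      simp only [labelF, Finset.mem_filter, Finset.mem_univ, true_and,
        Equiv.apply_symm_apply]
      exact ⟨hcv, hC hcC hwC hcw⟩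
    rw [← heq] at this
    simp only [labelF, Finset.mem_filter, Equiv.apply_symm_apply] at this
    exact this.2.2
  -- key: if x before y, then N(x) ⊆ N(y)
  have key : ∀ x ∈ {v | v ∈ I ∧ ∃ w ∈ C, π v w ∧ v ≠ w},
      ∀ y ∈ {v | v ∈ I ∧ ∃ w ∈ C, π v w ∧ v ≠ w},
      σ.symm x < σ.symm y → G.neighborSet x ⊆ G.neighborSet y := by
    intro x hx y hy hxy a haNx
    obtain ⟨hxI, wx, hwxC, hπx, hxwx⟩ := hx
    obtain ⟨hyI, wy, hwyC, hπy, hywy⟩ := hy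
    have haxAdj : G.Adj x a := haNx
    by_contra haNy
    have haAdjy : ¬ G.Adj y a := haNy
    have haC : a ∈ C := by
      rcases hpart a with h | h
      · exact h.1
      · exact absurd haxAdj.symm (hI a h.1 x hxI)
    have hay : a ≠ y := by
      intro h; rcases hpart a with h' | h'
      · exact h'.2 (h ▸ hyI)
      · exact h'.2 haC
    have hya : σ.symm y < σ.symm a := by
      rcases lt_trichotomy (σ.symm a) (σ.symm y) with h | h | h
      · exact absurd ((claim y hyI wy hwyC hπy hywy a haC h).symm) haAdjy
      · exact absurd (σ.symm.injective h) hay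
      · exact h
    have hns := hσ (σ.symm y) (σ.symm a) (le_of_lt hya)
    rw [Equiv.apply_symm_apply, Equiv.apply_symm_apply] at hns
    apply hns
    constructor
    · intro k hk
      simp only [labelF, Finset.mem_filter, Finset.mem_univ, true_and] at hk ⊢
      obtain ⟨hkj, hadj⟩ := hk
      have hskC : σ k ∈ C := by
        rcases hpart (σ k) with h | h
        · exact h.1
        · exact absurd hadj (hI (σ k) h.1 y hyI)
      have hne : σ k ≠ a := by
        intro h
        have hk' : k = σ.symm a := by rw [← h]; simp
        rw [hk'] at hkj
        exact absurd (hya.trans hkj) (lt_irrefl _)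
      exact ⟨hkj, hC hskC haC hne⟩
    · intro hsub
      have hxmem : σ.symm x ∈ labelF G σ (σ.symm y) a := by
        simp only [labelF, Finset.mem_filter, Finset.mem_univ, true_and,
          Equiv.apply_symm_apply]
        exact ⟨hxy, haxAdj⟩
      have := hsub hxmem
      simp only [labelF, Finset.mem_filter, Equiv.apply_symm_apply] at this
      exact hI x hxI y hyI this.2.2
  intro x hx y hy
  rcases lt_trichotomy (σ.symm x) (σ.symm y) with h | h | h
  · exact Or.inl (key x hx y hy h)
  · left; rw [σ.symm.injective h]
  · exact Or.inr (key y hy x hx h)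
end

section
/- Let G be a split graph with split partition (C,I) and σ an MNS ordering of G that is a linear extension of a partial order π. If x, y ∈ I both have some clique vertex strictly above them in π and x ≺_σ y, then N(x) ⊆ N(y). -/
open Finset

variable {V : Type*} {n : ℕ}

/-- Let `σ` be an MNS ordering of a split graph extending `π`. If `x, y ∈ I` both have
some clique vertex strictly above them in `π`, and `x ≺_σ y`, then `N(x) ⊆ N(y)`. -/
theorem mns_premature_nested (G : SimpleGraph V) [DecidableRel G.Adj] (σ : Fin n ≃ V)
    (C I : Set V) (hpart : ∀ v : V, (v ∈ C ∧ v ∉ I) ∨ (v ∈ I ∧ v ∉ C))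
    (hC : G.IsClique C) (hI : ∀ u ∈ I, ∀ v ∈ I, ¬ G.Adj u v)
    (π : V → V → Prop) (hπ : IsPartialOrder V π)
    (hσ : IsSearchOrdering mnsLt G σ)
    (hext : ∀ u v : V, π u v → u ≠ v → σ.symm u < σ.symm v)
    (x y : V) (hx : x ∈ I) (hy : y ∈ I)
    (hxC : ∃ c ∈ C, π x c ∧ x ≠ c) (hyC : ∃ c ∈ C, π y c ∧ y ≠ c)
    (hxy : σ.symm x < σ.symm y) :
    G.neighborSet x ⊆ G.neighborSet y := by
  obtain ⟨c, hcC, hyc, hync⟩ := hyC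
  set j : Fin n := σ.symm y with hj
  have hσj : σ j = y := σ.apply_symm_apply y
  have hjc : j < σ.symm c := hext y c hyc hync
  -- membership in labelF j y implies clique
  have hmemC : ∀ k, k ∈ labelF G σ j y → σ k ∈ C := by
    intro k hk
    simp only [labelF, Finset.mem_filter] at hk
    rcases hpart (σ k) with h | h
    · exact h.1
    · exact absurd hk.2.2 (hI (σ k) h.1 y hy)
  -- key: every clique vertex before j is a neighbor of y
  have hkey : ∀ k : Fin n, k < j → σ k ∈ C → G.Adj (σ k) y := by
    intro k hkj hkC
    have hsub : labelF G σ j y ⊆ labelF G σ j (σ (σ.symm c)) := by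
      intro m hm
      have hmC := hmemC m hm
      simp only [labelF, Finset.mem_filter] at hm ⊢
      refine ⟨Finset.mem_univ m, hm.2.1, ?_⟩
      rw [σ.apply_symm_apply]
      have hne : σ m ≠ c := by
        intro h
        have : σ.symm (σ m) = σ.symm c := by rw [h]
        rw [σ.symm_apply_apply] at this
        exact absurd (this ▸ hm.2.1) (lt_asymm hjc)
      exact hC hmC hcC hne
    have hns := hσ j (σ.symm c) (le_of_lt hjc)
    rw [hσj] at hns
    have heq : labelF G σ j (σ (σ.symm c)) ⊆ labelF G σ j y := by
      by_contra hcon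
      exact hns ⟨hsub, hcon⟩
    have hkc : k ∈ labelF G σ j (σ (σ.symm c)) := by
      simp only [labelF, Finset.mem_filter]
      refine ⟨Finset.mem_univ k, hkj, ?_⟩
      rw [σ.apply_symm_apply]
      have hne : σ k ≠ c := by
        intro h
        have : σ.symm (σ k) = σ.symm c := by rw [h]
        rw [σ.symm_apply_apply] at this
        exact absurd (this ▸ hkj) (lt_asymm hjc)
      exact hC hkC hcC hne
    have := heq hkc
    simp only [labelF, Finset.mem_filter] at this
    exact this.2.2
  -- main argument
  intro v hv
  have hAdj : G.Adj x v := hv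
  have hvC : v ∈ C := by
    rcases hpart v with h | h
    · exact h.1
    · exact absurd hAdj (hI x hx v h.1)
  set m : Fin n := σ.symm v with hm
  have hσm : σ m = v := σ.apply_symm_apply v
  have hmj : m ≠ j := by
    intro h
    have : v = y := by rw [← hσm, h, hσj]
    rcases hpart v with hh | hh
    · exact hh.2 (this ▸ hy)
    · exact hh.2 hvC
  rcases lt_or_gt_of_ne hmj with hlt | hgt
  · -- v before y: use hkey
    have := hkey m hlt (hσm ▸ hvC)
    rw [hσm] at this
    exact this.symm
  · -- v after y: contradiction with MNS
    exfalso
    have hns := hσ j m (le_of_lt hgt)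
    rw [hσj] at hns
    apply hns
    constructor
    · intro k hk
      have hkC := hmemC k hk
      simp only [labelF, Finset.mem_filter] at hk ⊢
      refine ⟨Finset.mem_univ k, hk.2.1, ?_⟩
      rw [hσm]
      have hne : σ k ≠ v := by
        intro h
        have : σ.symm (σ k) = σ.symm v := by rw [h]
        rw [σ.symm_apply_apply] at this
        subst this
        exact lt_asymm hgt hk.2.1
      exact hC hkC hvC hne
    · intro hcon
      have hix : (σ.symm x) ∈ labelF G σ j (σ m) := by
        simp only [labelF, Finset.mem_filter]
        refine ⟨Finset.mem_univ _, hxy, ?_⟩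
        rw [hσm, σ.apply_symm_apply]
        exact hAdj
      have := hmemC _ (hcon hix)
      rw [σ.apply_symm_apply] at this
      rcases hpart x with h | h
      · exact h.2 hx
      · exact h.2 this
end

section
/- In any MCS ordering σ of a split graph G with split partition (C,I): if u, v ∈ I, all vertices of C precede u in σ, and |N(u)| < |N(v)|, then v ≺_σ u. -/
open Finset

variable {V : Type*} {n : ℕ}

/-- If every neighbor of `x` precedes `i` in `σ`, then the label of `x` at step `i`
has cardinality equal to the degree of `x`. -/
lemma labelF_card_eq_degree {V : Type*} {n : ℕ} (G : SimpleGraph V) [Fintype V]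
    [DecidableRel G.Adj] (σ : Fin n ≃ V) (i : Fin n) (x : V)
    (h : ∀ w, G.Adj x w → σ.symm w < i) :
    (labelF G σ i x).card = (G.neighborFinset x).card := by
  have : labelF G σ i x = (G.neighborFinset x).map σ.symm.toEmbedding := by
    ext j
    simp only [labelF, Finset.mem_filter, Finset.mem_univ, true_and, Finset.mem_map,
      SimpleGraph.mem_neighborFinset, Equiv.coe_toEmbedding]
    constructor
    · rintro ⟨hj, hadj⟩
      exact ⟨σ j, hadj.symm, by simp⟩
    · rintro ⟨w, hw, rfl⟩
      exact ⟨h w hw, by simpa using hw.symm⟩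
  rw [this, Finset.card_map]

/-- In an MCS ordering `σ` of a split graph: if `u, v ∈ I`, all vertices of `C`
precede `u` in `σ`, and `|N(u)| < |N(v)|`, then `v ≺_σ u`. -/
theorem mcs_split_degree (G : SimpleGraph V) [Fintype V] [DecidableRel G.Adj]
    (σ : Fin n ≃ V)
    (C I : Set V) (hpart : ∀ v : V, (v ∈ C ∧ v ∉ I) ∨ (v ∈ I ∧ v ∉ C))
    (hC : G.IsClique C) (hI : ∀ u ∈ I, ∀ v ∈ I, ¬ G.Adj u v)
    (hσ : IsSearchOrdering mcsLt G σ)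
    (u v : V) (hu : u ∈ I) (hv : v ∈ I)
    (hCu : ∀ c ∈ C, σ.symm c < σ.symm u)
    (hdeg : (G.neighborFinset u).card < (G.neighborFinset v).card) :
    σ.symm v < σ.symm u := by
  have hnbr : ∀ x ∈ I, ∀ w, G.Adj x w → σ.symm w < σ.symm u := by
    intro x hx w hw
    have hwC : w ∈ C := by
      rcases hpart w with ⟨h1, _⟩ | ⟨h1, h2⟩
      · exact h1
      · exact absurd hw (hI x hx w h1)
    exact hCu w hwC
  have hcu : (labelF G σ (σ.symm u) u).card = (G.neighborFinset u).card :=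
    labelF_card_eq_degree G σ (σ.symm u) u (hnbr u hu)
  have hcv : (labelF G σ (σ.symm u) v).card = (G.neighborFinset v).card :=
    labelF_card_eq_degree G σ (σ.symm u) v (hnbr v hv)
  by_contra hlt
  push_neg at hlt
  have := hσ (σ.symm u) (σ.symm v) hlt
  simp only [mcsLt, Equiv.apply_symm_apply] at this
  omega
end

section
/- If (π, A) fulfills the nested property for a split graph G with split partition (C,I), then the nested partial order π^N(π,A), defined as the reflexive transitive closure of the union of relations (P1)–(P4), is antisymmetric (hence a partial order). -/
variable {V : Type*}

private lemma rtg_antisymm_aux {r Q : V → V → Prop}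
    (hsub : ∀ x y, r x y → Q x y) (hQr : ∀ x, Q x x)
    (hQt : ∀ x y z, Q x y → Q y z → Q x z)
    (hQa : ∀ x y, Q x y → Q y x → x = y) :
    ∀ x y, Relation.ReflTransGen r x y → Relation.ReflTransGen r y x → x = y := by
  have key : ∀ x y, Relation.ReflTransGen r x y → Q x y := by
    intro x y h
    induction h with
    | refl => exact hQr x
    | tail h1 h2 ih => exact hQt _ _ _ ih (hsub _ _ h2)
  intro x y h1 h2
  exact hQa x y (key x y h1) (key y x h2)

/-- If `(π, A)` fulfills the nested property (witnessed by the decomposition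
`C_1, I_1, …, C_k, I_k` satisfying (N1)–(N4)), then the nested partial order
`π^N(π, A)`, the reflexive transitive closure of (P1)–(P4), is antisymmetric. -/
theorem nested_partial_order_antisymm
    (G : SimpleGraph V) (C I : Set V)
    (hpart : ∀ v : V, (v ∈ C ∧ v ∉ I) ∨ (v ∈ I ∧ v ∉ C))
    (hC : G.IsClique C) (hI : ∀ u ∈ I, ∀ v ∈ I, ¬ G.Adj u v)
    (π : V → V → Prop) (hπ : IsPartialOrder V π)
    (A : Set V) (hA : A ⊆ I)
    (k : ℕ) (Cs Is : Fin k → Set V)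
    (hCsC : ∀ i, Cs i ⊆ C)
    (hdisjC : ∀ i j, i ≠ j → Disjoint (Cs i) (Cs j))
    (hdisjI : ∀ i j, i ≠ j → Disjoint (Is i) (Is j))
    (hdisjCI : ∀ i j, Disjoint (Cs i) (Is j))
    (hunion : (⋃ j, Is j) = A)
    (hnbhd : ∀ i, ∀ x ∈ Is i, G.neighborSet x = ⋃ j ≤ i, Cs j)
    (hN1 : ∀ x y : V, π x y → x ≠ y → y ∈ C → x ∈ C ∪ A)
    (hN3 : ∀ i, ∀ y ∈ Cs i ∪ Is i, ∀ x : V, π x y → x ≠ y → ∃ j ≤ i, x ∈ Cs j ∪ Is j)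
    (hN4 : ∀ i, ∀ x ∈ Is i, ∀ x' ∈ Is i,
      (∃ y ∈ Cs i, π x y ∧ x ≠ y) → (∃ y ∈ Cs i, π x' y ∧ x' ≠ y) → x = x')
    (πN : V → V → Prop)
    (hπN : πN = Relation.ReflTransGen (fun x y =>
      π x y ∨
      (∃ i, x ∈ Is i ∪ Cs i ∧ y ∉ ⋃ j ≤ i, (Is j ∪ Cs j)) ∨
      (x ∈ C ∧ y ∈ I \ A) ∨
      (∃ i, x ∈ Is i ∧ y ∈ Is i ∧ ∃ z ∈ Cs i, π x z ∧ x ≠ z))) :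
    ∀ x y : V, πN x y → πN y x → x = y := by
  classical
  subst hπN
  have πtrans : ∀ a b c : V, π a b → π b c → π a c := fun a b c h1 h2 => hπ.trans a b c h1 h2
  have πanti : ∀ a b : V, π a b → π b a → a = b := fun a b h1 h2 => hπ.antisymm a b h1 h2
  -- basic disjointness facts
  have hCIdisj : ∀ v, v ∈ C → v ∈ I → False := by
    intro v hvC hvI
    rcases hpart v with ⟨_, h⟩ | ⟨_, h⟩
    · exact h hvI
    · exact h hvC
  have hIsA : ∀ (i : Fin k) (v : V), v ∈ Is i → v ∈ A := by
    intro i v hv; rw [← hunion]; exact Set.mem_iUnion.mpr ⟨i, hv⟩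
  have hCsIs : ∀ (i j : Fin k) (v : V), v ∈ Cs i → v ∈ Is j → False :=
    fun i j v h h' => Set.disjoint_left.mp (hdisjCI i j) h h'
  have huniq : ∀ (i j : Fin k) (v : V), v ∈ Cs i ∪ Is i → v ∈ Cs j ∪ Is j → i = j := by
    intro i j v hv hv'
    by_contra hij
    rcases hv with h | h <;> rcases hv' with h' | h'
    · exact Set.disjoint_left.mp (hdisjC i j hij) h h'
    · exact hCsIs i j v h h'
    · exact hCsIs j i v h' h
    · exact Set.disjoint_left.mp (hdisjI i j hij) h h'
  -- the level function
  set f : V → ℕ := fun v =>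
    if h : ∃ i : Fin k, v ∈ Cs i ∪ Is i then 2 * (Classical.choose h).val + 2
    else if v ∈ I then 2 * k + 3 else 2 * k + 2 with hfdef
  have hfblk : ∀ (i : Fin k) (v : V), v ∈ Cs i ∪ Is i → f v = 2 * i.val + 2 := by
    intro i v hv
    have hex : ∃ j : Fin k, v ∈ Cs j ∪ Is j := ⟨i, hv⟩
    have hch : Classical.choose hex = i := huniq _ i v (Classical.choose_spec hex) hv
    simp only [hfdef, dif_pos hex, hch]
  have hfI : ∀ v : V, (¬ ∃ i : Fin k, v ∈ Cs i ∪ Is i) → v ∈ I → f v = 2 * k + 3 := by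
    intro v h hvI; simp only [hfdef, dif_neg h, if_pos hvI]
  have hfC : ∀ v : V, (¬ ∃ i : Fin k, v ∈ Cs i ∪ Is i) → v ∉ I → f v = 2 * k + 2 := by
    intro v h hvI; simp only [hfdef, dif_neg h, if_neg hvI]
  have hflt : ∀ i : Fin k, 2 * i.val + 2 ≤ 2 * k := by
    intro i; have := i.isLt; omega
  have hfle : ∀ v : V, f v ≤ 2 * k + 3 := by
    intro v
    by_cases h : ∃ i : Fin k, v ∈ Cs i ∪ Is i
    · obtain ⟨i, hi⟩ := h
      rw [hfblk i v hi]; have := hflt i; omega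
    · by_cases hvI : v ∈ I
      · rw [hfI v h hvI]
      · rw [hfC v h hvI]; omega
  -- from the value of f, recover block membership
  have hfinv : ∀ (i : Fin k) (v : V), f v = 2 * i.val + 2 → v ∈ Cs i ∪ Is i := by
    intro i v hv
    by_cases h : ∃ j : Fin k, v ∈ Cs j ∪ Is j
    · obtain ⟨j, hj⟩ := h
      have := hfblk j v hj
      have hij : j = i := by
        apply Fin.ext; omega
      exact hij ▸ hj
    · exfalso
      have := hflt i
      by_cases hvI : v ∈ I
      · rw [hfI v h hvI] at hv; omega
      · rw [hfC v h hvI] at hv; omega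
  -- f is monotone along π
  have hπf : ∀ x y : V, π x y → f x ≤ f y := by
    intro x y hxy
    by_cases hxyeq : x = y
    · subst hxyeq; exact le_refl _
    by_cases hy : ∃ i : Fin k, y ∈ Cs i ∪ Is i
    · obtain ⟨i, hyi⟩ := hy
      obtain ⟨j, hj, hxj⟩ := hN3 i y hyi x hxy hxyeq
      rw [hfblk i y hyi, hfblk j x hxj]
      have : j.val ≤ i.val := hj
      omega
    · rcases hpart y with ⟨hyC, hyI⟩ | ⟨hyI, _⟩
      · rw [hfC y hy hyI]
        rcases hN1 x y hxy hxyeq hyC with hxC | hxA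
        · by_cases hx : ∃ i : Fin k, x ∈ Cs i ∪ Is i
          · obtain ⟨i, hxi⟩ := hx
            rw [hfblk i x hxi]; have := hflt i; omega
          · have hxI : x ∉ I := fun h => hCIdisj x hxC h
            rw [hfC x hx hxI]
        · rw [← hunion] at hxA
          obtain ⟨j, hxj⟩ := Set.mem_iUnion.mp hxA
          rw [hfblk j x (Or.inr hxj)]
          have := hflt j; omega
      · rw [hfI y hy hyI]
        exact hfle x
  -- key uniqueness lemma: a π-predecessor within Is i of a "source" is that source
  have L1 : ∀ (i : Fin k) (x x₀ : V), x ∈ Is i → x₀ ∈ Is i →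
      (∃ z ∈ Cs i, π x₀ z ∧ x₀ ≠ z) → π x x₀ → x = x₀ := by
    intro i x x₀ hx hx₀ hsrc hπx
    obtain ⟨z, hz, hpz, hne⟩ := hsrc
    by_cases h : x = x₀
    · exact h
    · have hπxz : π x z := πtrans _ _ _ hπx hpz
      have hxz : x ≠ z := fun he => hCsIs i i z hz (he ▸ hx)
      exact hN4 i x hx x₀ hx₀ ⟨z, hz, hπxz, hxz⟩ ⟨z, hz, hpz, hne⟩
  -- the tie-break relation
  set T : V → V → Prop := fun x y =>
    ∃ (i : Fin k) (x₀ : V), y ∈ Is i ∧ x₀ ∈ Is i ∧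
      (∃ z ∈ Cs i, π x₀ z ∧ x₀ ≠ z) ∧ (x = x₀ ∨ π x x₀) ∧ x ≠ y with hTdef
  set S : V → V → Prop := fun x y => π x y ∨ T x y with hSdef
  -- S is "transitive up to equality" on fibers of f
  have hStrans : ∀ x y z : V, f x = f y → f y = f z → S x y → S y z → x = z ∨ S x z := by
    intro x y z hfxy hfyz hSxy hSyz
    rcases hSxy with hπxy | hTxy
    · rcases hSyz with hπyz | hTyz
      · exact Or.inr (Or.inl (πtrans _ _ _ hπxy hπyz))
      · obtain ⟨i, y₀, hz, hy₀, hsrc, hyy₀, hyz⟩ := hTyz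
        have hxy₀ : π x y₀ := by
          rcases hyy₀ with rfl | hp
          · exact hπxy
          · exact πtrans _ _ _ hπxy hp
        by_cases hxz : x = z
        · exact Or.inl hxz
        · exact Or.inr (Or.inr ⟨i, y₀, hz, hy₀, hsrc, Or.inr hxy₀, hxz⟩)
    · obtain ⟨i, x₀, hy, hx₀, hsrc, hxx₀, hxy⟩ := hTxy
      rcases hSyz with hπyz | hTyz
      · -- z lies in block i since f z = f y
        have hfy : f y = 2 * i.val + 2 := hfblk i y (Or.inr hy)
        have hzblk : z ∈ Cs i ∪ Is i := hfinv i z (by omega)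
        rcases hzblk with hzC | hzI
        · have hyzne : y ≠ z := fun he => hCsIs i i z hzC (he ▸ hy)
          have hysrc : ∃ w ∈ Cs i, π y w ∧ y ≠ w := ⟨z, hzC, hπyz, hyzne⟩
          have hyx₀ : y = x₀ := hN4 i y hy x₀ hx₀ hysrc hsrc
          rcases hxx₀ with rfl | hπxx₀
          · exact absurd hyx₀.symm hxy
          · have hπxy' : π x y := hyx₀ ▸ hπxx₀
            exact Or.inr (Or.inl (πtrans _ _ _ hπxy' hπyz))
        · by_cases hxz : x = z
          · exact Or.inl hxz
          · exact Or.inr (Or.inr ⟨i, x₀, hzI, hx₀, hsrc, hxx₀, hxz⟩)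
      · obtain ⟨i', y₀, hz, hy₀, hsrc', hyy₀, hyz⟩ := hTyz
        have hfy : f y = 2 * i.val + 2 := hfblk i y (Or.inr hy)
        have hfz : f z = 2 * i'.val + 2 := hfblk i' z (Or.inr hz)
        have hii' : i = i' := by apply Fin.ext; omega
        subst hii'
        by_cases hxz : x = z
        · exact Or.inl hxz
        · exact Or.inr (Or.inr ⟨i, x₀, hz, hx₀, hsrc, hxx₀, hxz⟩)
  -- antisymmetry of S on fibers: the mixed case
  have hSTanti : ∀ x y : V, f x = f y → π x y → T y x → x = y := by
    intro x y hfxy hπxy hTyx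
    obtain ⟨i, y₀, hx, hy₀, hsrc, hyy₀, hyx⟩ := hTyx
    have hfx : f x = 2 * i.val + 2 := hfblk i x (Or.inr hx)
    have hyblk : y ∈ Cs i ∪ Is i := hfinv i y (by omega)
    rcases hyblk with hyC | hyI
    · -- y ∈ Cs i : x is a source, equal to y₀ by N4; then π y x and π x y
      have hxyne : x ≠ y := fun he => hCsIs i i y hyC (he ▸ hx)
      have hxsrc : ∃ w ∈ Cs i, π x w ∧ x ≠ w := ⟨y, hyC, hπxy, hxyne⟩
      have hxy₀ : x = y₀ := hN4 i x hx y₀ hy₀ hxsrc hsrc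
      rcases hyy₀ with rfl | hπyy₀
      · exact (hCsIs i i y hyC hy₀).elim
      · have hπyx : π y x := hxy₀ ▸ hπyy₀
        exact πanti x y hπxy hπyx
    · -- y ∈ Is i : y = y₀ by L1, then x = y by L1
      have hyeq : y = y₀ := by
        rcases hyy₀ with rfl | hp
        · rfl
        · exact L1 i y y₀ hyI hy₀ hsrc hp
      exact L1 i x y hx (hyeq ▸ hy₀) (hyeq ▸ hsrc) hπxy
  have hSanti : ∀ x y : V, f x = f y → S x y → S y x → x = y := by
    intro x y hfxy hSxy hSyx
    rcases hSxy with hπxy | hTxy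
    · rcases hSyx with hπyx | hTyx
      · exact πanti x y hπxy hπyx
      · exact hSTanti x y hfxy hπxy hTyx
    · rcases hSyx with hπyx | hTyx
      · exact (hSTanti y x hfxy.symm hπyx hTxy).symm
      · obtain ⟨i, x₀, hy, hx₀, hsrc, hxx₀, hxy⟩ := hTxy
        obtain ⟨i', y₀, hx, hy₀, hsrc', hyy₀, hyx⟩ := hTyx
        have hfy : f y = 2 * i.val + 2 := hfblk i y (Or.inr hy)
        have hfx : f x = 2 * i'.val + 2 := hfblk i' x (Or.inr hx)
        have hii' : i = i' := by apply Fin.ext; omega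
        subst hii'
        have hxeq : x = x₀ := by
          rcases hxx₀ with rfl | hp
          · rfl
          · exact L1 i x x₀ hx hx₀ hsrc hp
        have hyeq : y = y₀ := by
          rcases hyy₀ with rfl | hp
          · rfl
          · exact L1 i y y₀ hy hy₀ hsrc' hp
        exact hN4 i x hx y hy (hxeq ▸ hsrc) (hyeq ▸ hsrc')
  -- the master preorder
  apply rtg_antisymm_aux
    (Q := fun x y => x = y ∨ f x < f y ∨ (f x = f y ∧ S x y))
  · -- base relation is contained in Q
    intro x y h
    rcases h with hπxy | ⟨i, hx, hy⟩ | ⟨hxC, hyI, hyA⟩ | ⟨i, hx, hy, z, hz, hπxz, hxz⟩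
    · by_cases hxy : x = y
      · exact Or.inl hxy
      · have hle := hπf x y hπxy
        rcases lt_or_eq_of_le hle with hlt | heq
        · exact Or.inr (Or.inl hlt)
        · exact Or.inr (Or.inr ⟨heq, Or.inl hπxy⟩)
    · -- (P2)
      have hx' : x ∈ Cs i ∪ Is i := hx.symm
      have hfx : f x = 2 * i.val + 2 := hfblk i x hx'
      refine Or.inr (Or.inl ?_)
      by_cases hyb : ∃ j : Fin k, y ∈ Cs j ∪ Is j
      · obtain ⟨j, hyj⟩ := hyb
        have hfy : f y = 2 * j.val + 2 := hfblk j y hyj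
        have hij : ¬ j ≤ i := by
          intro hji
          exact hy (Set.mem_iUnion₂.mpr ⟨j, hji, hyj.symm⟩)
        have : i < j := lt_of_not_ge hij
        have : i.val < j.val := this
        omega
      · have := hflt i
        by_cases hyI' : y ∈ I
        · rw [hfI y hyb hyI']; omega
        · rw [hfC y hyb hyI']; omega
    · -- (P3)
      refine Or.inr (Or.inl ?_)
      have hynb : ¬ ∃ j : Fin k, y ∈ Cs j ∪ Is j := by
        rintro ⟨j, hj | hj⟩
        · exact hCIdisj y (hCsC j hj) hyI
        · exact hyA (hIsA j y hj)
      rw [hfI y hynb hyI]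
      by_cases hxb : ∃ j : Fin k, x ∈ Cs j ∪ Is j
      · obtain ⟨j, hxj⟩ := hxb
        rw [hfblk j x hxj]; have := hflt j; omega
      · have hxI : x ∉ I := fun h => hCIdisj x hxC h
        rw [hfC x hxb hxI]; omega
    · -- (P4)
      by_cases hxy : x = y
      · exact Or.inl hxy
      · have hfx : f x = 2 * i.val + 2 := hfblk i x (Or.inr hx)
        have hfy : f y = 2 * i.val + 2 := hfblk i y (Or.inr hy)
        exact Or.inr (Or.inr ⟨by omega,
          Or.inr ⟨i, x, hy, hx, ⟨z, hz, hπxz, hxz⟩, Or.inl rfl, hxy⟩⟩)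
  · -- Q is reflexive
    intro x; exact Or.inl rfl
  · -- Q is transitive
    intro x y z hxy hyz
    rcases hxy with rfl | hlt | ⟨heq, hS⟩
    · exact hyz
    · rcases hyz with rfl | hlt' | ⟨heq', _⟩
      · exact Or.inr (Or.inl hlt)
      · exact Or.inr (Or.inl (lt_trans hlt hlt'))
      · exact Or.inr (Or.inl (heq' ▸ hlt))
    · rcases hyz with rfl | hlt' | ⟨heq', hS'⟩
      · exact Or.inr (Or.inr ⟨heq, hS⟩)
      · exact Or.inr (Or.inl (heq ▸ hlt'))
      · rcases hStrans x y z heq heq' hS hS' with hxz | hSxz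
        · exact Or.inl hxz
        · exact Or.inr (Or.inr ⟨heq.trans heq', hSxz⟩)
  · -- Q is antisymmetric
    intro x y hxy hyx
    rcases hxy with rfl | hlt | ⟨heq, hS⟩
    · rfl
    · rcases hyx with rfl | hlt' | ⟨heq', _⟩
      · rfl
      · omega
      · omega
    · rcases hyx with rfl | hlt' | ⟨heq', hS'⟩
      · rfl
      · omega
      · exact hSanti x y heq hS hS'
end

section
/- Let G be a split graph with split partition (C,I), π a partial order on V(G), and A = {u ∈ I : ∃v with (v ∈ C or |N(u)| < |N(v)|) and u ≺_π v}. There is an MCS ordering of G extending π if and only if (π, A) fulfills the nested property. -/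
open Finset

variable {V : Type*} {n : ℕ}

/-- `(π, A)` fulfills the nested property for the split graph `G` with clique `C`
and independent set `I`: conditions (N1)–(N4). -/
def NestedProperty (G : SimpleGraph V) (C I : Set V) (π : V → V → Prop)
    (A : Set V) : Prop :=
  (∀ x y : V, π x y → x ≠ y → y ∈ C → x ∈ C ∪ A) ∧
  ∃ (k : ℕ) (Cs Is : Fin k → Set V),
    (∀ i, Cs i ⊆ C) ∧
    (∀ i j, i ≠ j → Disjoint (Cs i) (Cs j)) ∧
    (∀ i j, i ≠ j → Disjoint (Is i) (Is j)) ∧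
    (∀ i j, Disjoint (Cs i) (Is j)) ∧
    (⋃ j, Is j) = A ∧
    (∀ i, ∀ x ∈ Is i, G.neighborSet x = ⋃ j ≤ i, Cs j) ∧
    (∀ i, ∀ y ∈ Cs i ∪ Is i, ∀ x : V, π x y → x ≠ y → ∃ j ≤ i, x ∈ Cs j ∪ Is j) ∧
    (∀ i, ∀ x ∈ Is i, ∀ x' ∈ Is i,
      (∃ y ∈ Cs i, π x y ∧ x ≠ y) → (∃ y ∈ Cs i, π x' y ∧ x' ≠ y) → x = x')

/-!
In a maximum cardinality search on a split graph, an independent vertex `u` visited while some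
clique vertex `y` is still unvisited has exactly the label of `y`. Hence `u` is adjacent to every
clique vertex visited before it, and all neighbours of an earlier independent vertex are visited
before `u`. If the search extends `π`, every vertex of `A` is visited before some clique vertex
(a later vertex of larger degree forces this too), so the neighbourhoods of the vertices of `A`
are nested and increase with the degree. Grouping `A` by degree, and each clique vertex by the
least degree of its neighbours in `A`, gives the blocks `I_i` and `C_i`.

Conversely, visit the blocks `C_1 ∪ I_1, C_2 ∪ I_2, …` in turn (inside a block first `C_i` and the
at most one vertex of `I_i` that `π` puts before a vertex of `C_i`, then the rest of `I_i`), then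
the remaining clique vertices, then the remaining independent vertices by decreasing degree,
breaking ties by a linear extension of `π`. By (N1)–(N3) this extends `π`. By (N2) and (N4) a
chosen vertex of `C ∪ A` is adjacent to every earlier neighbour of any later vertex, while a
chosen vertex outside `C ∪ A` has all its neighbours visited and the largest remaining degree.
-/

open Function SimpleGraph

section SplitGraph

structure IsSplitPartition (G : SimpleGraph V) (C I : Set V) : Prop where
  mem_or_mem : ∀ v, (v ∈ C ∧ v ∉ I) ∨ (v ∈ I ∧ v ∉ C)
  isClique : G.IsClique C
  not_adj : ∀ u ∈ I, ∀ v ∈ I, ¬ G.Adj u v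

variable {G : SimpleGraph V} {C I : Set V} {u v : V}

theorem IsSplitPartition.mem_I_iff (hG : IsSplitPartition G C I) : v ∈ I ↔ v ∉ C := by
  rcases hG.mem_or_mem v with h | h <;> tauto

theorem IsSplitPartition.mem_C_of_adj (hG : IsSplitPartition G C I) (hu : u ∈ I)
    (huv : G.Adj u v) : v ∈ C := by
  by_contra hv
  exact hG.not_adj u hu v (hG.mem_I_iff.2 hv) huv

/-- The set `A` of the statement. -/
def forcedEarly (G : SimpleGraph V) [Fintype V] [DecidableRel G.Adj] (C I : Set V)
    (π : V → V → Prop) : Set V :=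
  {u | u ∈ I ∧ ∃ v, (v ∈ C ∨ G.degree u < G.degree v) ∧ π u v ∧ u ≠ v}

theorem mem_forcedEarly_of_pi [Fintype V] [DecidableRel G.Adj] {π : V → V → Prop}
    [IsPartialOrder V π] {x y : V} (hx : x ∈ I) (hy : y ∈ forcedEarly G C I π) (hxy : π x y)
    (hne : x ≠ y) (hdeg : G.degree x ≤ G.degree y) : x ∈ forcedEarly G C I π := by
  obtain ⟨-, w, hw, hyw, hyw'⟩ := hy
  refine ⟨hx, w, hw.imp_right hdeg.trans_lt, trans_of π hxy hyw, ?_⟩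
  rintro rfl
  exact hne (antisymm_of π hxy hyw)

end SplitGraph

section Search

variable [Fintype V] {α β : Type*} [LinearOrder α] [LinearOrder β]
  (G : SimpleGraph V) [DecidableRel G.Adj]

def earlierNbrs (f : V → α) (u v : V) : Finset V := {z | f z < f u ∧ G.Adj z v}

/-- Visiting the vertices in increasing order of `f` is a maximum cardinality search. -/
def IsMCSOrderBy (f : V → α) : Prop :=
  ∀ u v, f u ≤ f v → #(earlierNbrs G f u v) ≤ #(earlierNbrs G f u u)

theorem card_labelF (σ : Fin n ≃ V) (i : Fin n) (v : V) :
    #(labelF G σ i v) = #(earlierNbrs G σ.symm (σ i) v) := by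
  rw [← card_map σ.toEmbedding]
  congr 1
  ext z
  simp [labelF, earlierNbrs]

theorem isSearchOrdering_mcsLt_iff (σ : Fin n ≃ V) :
    IsSearchOrdering mcsLt G σ ↔ IsMCSOrderBy G σ.symm := by
  simp only [IsSearchOrdering, IsMCSOrderBy, mcsLt, not_lt, card_labelF]
  constructor
  · intro h u v huv
    simpa using h (σ.symm u) (σ.symm v) huv
  · intro h i j hij
    simpa using h (σ i) (σ j) (by simpa using hij)

theorem isMCSOrderBy_congr {f : V → α} {g : V → β} (h : ∀ u v, f u < f v ↔ g u < g v) :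
    IsMCSOrderBy G f ↔ IsMCSOrderBy G g := by
  have hle : ∀ u v, f u ≤ f v ↔ g u ≤ g v := fun u v => by
    simpa only [not_lt] using (h v u).not
  have hnbrs : ∀ u v, earlierNbrs G f u v = earlierNbrs G g u v := fun u v =>
    filter_congr fun z _ => by rw [h]
  simp only [IsMCSOrderBy, hle, hnbrs]

theorem exists_equiv_fin_symm_lt_iff {f : V → α} (hf : Injective f) :
    ∃ σ : Fin (Fintype.card V) ≃ V, ∀ u v, σ.symm u < σ.symm v ↔ f u < f v := by
  let _ := LinearOrder.lift' f hf
  exact ⟨(monoEquivOfFin V rfl).toEquiv, fun u v => (monoEquivOfFin V rfl).symm.lt_iff_lt⟩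

theorem exists_injective_rank (π : V → V → Prop) [IsPartialOrder V π] :
    ∃ r : V → ℕ, Injective r ∧ ∀ u v, π u v → u ≠ v → r u < r v := by
  classical
  obtain ⟨s, hs, hπs⟩ := extend_partialOrder π
  have hlt : ∀ u v, s u v → u ≠ v → #{w | s w u ∧ w ≠ u} < #{w | s w v ∧ w ≠ v} := by
    intro u v huv hne
    refine card_lt_card ((ssubset_iff_of_subset fun w hw => ?_).2 ⟨u, by simp [huv, hne], by simp⟩)
    simp only [mem_filter, mem_univ, true_and] at hw ⊢
    refine ⟨trans_of s hw.1 huv, ?_⟩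
    rintro rfl
    exact hne (antisymm_of s huv hw.1)
  refine ⟨fun v => #{w | s w v ∧ w ≠ v}, fun u v huv => ?_, fun u v h => hlt u v (hπs u v h)⟩
  by_contra hne
  rcases total_of s u v with h | h
  · exact (hlt u v h hne).ne huv
  · exact (hlt v u h (Ne.symm hne)).ne huv.symm

theorem card_earlierNbrs_le_degree (f : V → α) (u v : V) :
    #(earlierNbrs G f u v) ≤ G.degree v := by
  rw [← card_neighborFinset_eq_degree]
  exact card_le_card fun z hz => by simpa [earlierNbrs, adj_comm] using (mem_filter.1 hz).2.2

theorem earlierNbrs_eq_neighborFinset {f : V → α} {u v : V} (h : ∀ z, G.Adj z v → f z < f u) :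
    earlierNbrs G f u v = G.neighborFinset v := by
  ext z
  simp only [earlierNbrs, mem_filter, mem_univ, true_and, mem_neighborFinset]
  exact ⟨fun hz => hz.2.symm, fun hz => ⟨h z hz.symm, hz.symm⟩⟩

end Search

namespace IsMCSOrderBy

variable [Fintype V] {α : Type*} [LinearOrder α] {G : SimpleGraph V} [DecidableRel G.Adj]
  {C I : Set V} {f : V → α}

/-- The earlier neighbours of `u` are clique vertices, hence earlier neighbours of `y`, and MCS
forbids the inclusion to be strict. -/
theorem earlierNbrs_eq_of_mem_I (hM : IsMCSOrderBy G f) (hG : IsSplitPartition G C I) {u y : V}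
    (hu : u ∈ I) (hy : y ∈ C) (huy : f u ≤ f y) : earlierNbrs G f u u = earlierNbrs G f u y := by
  refine eq_of_subset_of_card_le (fun z hz => ?_) (hM u y huy)
  simp only [earlierNbrs, mem_filter, mem_univ, true_and] at hz ⊢
  refine ⟨hz.1, hG.isClique (hG.mem_C_of_adj hu hz.2.symm) hy ?_⟩
  rintro rfl
  exact (hz.1.trans_le huy).false

theorem adj_of_lt_of_mem_I (hM : IsMCSOrderBy G f) (hG : IsSplitPartition G C I) {u y z : V}
    (hu : u ∈ I) (hy : y ∈ C) (huy : f u ≤ f y) (hz : z ∈ C) (hzu : f z < f u) : G.Adj z u := by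
  have hzy : z ∈ earlierNbrs G f u y := by
    refine mem_filter.2 ⟨mem_univ z, hzu, hG.isClique hz hy ?_⟩
    rintro rfl
    exact (hzu.trans_le huy).false
  rw [← hM.earlierNbrs_eq_of_mem_I hG hu hy huy] at hzy
  exact (mem_filter.1 hzy).2.2

theorem lt_of_adj_of_lt (hM : IsMCSOrderBy G f) (hG : IsSplitPartition G C I) {x u c : V}
    (hx : x ∈ I) (hu : u ∈ I) (hux : f u < f x) (huc : G.Adj u c) : f c < f x := by
  by_contra! hxc
  have hu_mem : u ∈ earlierNbrs G f x c := mem_filter.2 ⟨mem_univ u, hux, huc⟩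
  rw [← hM.earlierNbrs_eq_of_mem_I hG hx (hG.mem_C_of_adj hu huc) hxc] at hu_mem
  exact hG.not_adj u hu x hx (mem_filter.1 hu_mem).2.2

theorem exists_mem_C_le (hM : IsMCSOrderBy G f) (hG : IsSplitPartition G C I) {u w : V}
    (hw : w ∈ C ∨ G.degree u < G.degree w) (huw : f u < f w) :
    ∃ y ∈ C, f u ≤ f y := by
  by_contra! hCu
  -- then the later `w` is an independent vertex whose neighbours are all visited, so its label
  -- `deg w` exceeds that of `u`
  have hwC : w ∉ C := fun hwC => (hCu w hwC).not_gt huw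
  have hfull : earlierNbrs G f u w = G.neighborFinset w :=
    earlierNbrs_eq_neighborFinset G fun z hz =>
      hCu z (hG.mem_C_of_adj (hG.mem_I_iff.2 hwC) hz.symm)
  have hlabel := hM u w huw.le
  rw [hfull, card_neighborFinset_eq_degree] at hlabel
  exact (hlabel.trans (card_earlierNbrs_le_degree G f u u)).not_gt (hw.resolve_left hwC)

theorem adj_of_adj_of_lt (hM : IsMCSOrderBy G f) (hf : Injective f) (hG : IsSplitPartition G C I)
    {a x y y₀ : V} (ha : a ∈ I) (hy₀ : y₀ ∈ C) (hay₀ : f a ≤ f y₀) (hay : G.Adj a y)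
    (hx : x ∈ C) (hxy : f x < f y) : G.Adj a x := by
  have hxa : f x ≠ f a := fun h => hG.mem_I_iff.1 ha (hf h ▸ hx)
  rcases hxa.lt_or_gt with hxa | hax
  · exact (hM.adj_of_lt_of_mem_I hG ha hy₀ hay₀ hx hxa).symm
  by_contra hnadj
  have hyC := hG.mem_C_of_adj ha hay
  -- an independent earlier neighbour `z` of `x` is impossible: whichever of `a`, `z` comes
  -- second, the neighbours of the other one (`x`, resp. `y`) would precede it
  have hsub : earlierNbrs G f x x ⊆ earlierNbrs G f x y := by
    intro z hz
    simp only [earlierNbrs, mem_filter, mem_univ, true_and] at hz ⊢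
    refine ⟨hz.1, ?_⟩
    by_cases hzC : z ∈ C
    · exact hG.isClique hzC hyC (ne_of_apply_ne f (hz.1.trans hxy).ne)
    exfalso
    have hzI := hG.mem_I_iff.2 hzC
    rcases lt_trichotomy (f z) (f a) with hza | hza | hza
    · exact (hM.lt_of_adj_of_lt hG ha hzI hza hz.2).not_gt hax
    · exact hnadj (hf hza ▸ hz.2)
    · exact ((hM.lt_of_adj_of_lt hG hzI ha hza hay).trans hz.1).not_gt hxy
  have ha_mem : a ∈ earlierNbrs G f x y := mem_filter.2 ⟨mem_univ a, hax, hay⟩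
  have ha_not : a ∉ earlierNbrs G f x x := fun h => hnadj (mem_filter.1 h).2.2
  exact (hM x y hxy.le).not_gt (card_lt_card ((ssubset_iff_of_subset hsub).2 ⟨a, ha_mem, ha_not⟩))

theorem neighborFinset_subset_of_lt (hM : IsMCSOrderBy G f) (hG : IsSplitPartition G C I)
    {a a' y : V} (ha : a ∈ I) (ha' : a' ∈ I) (hy : y ∈ C) (hay : f a' ≤ f y) (hlt : f a < f a') :
    G.neighborFinset a ⊆ G.neighborFinset a' := by
  intro c hc
  rw [mem_neighborFinset] at hc ⊢
  exact (hM.adj_of_lt_of_mem_I hG ha' hy hay (hG.mem_C_of_adj ha hc)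
    (hM.lt_of_adj_of_lt hG ha' ha hlt hc)).symm

end IsMCSOrderBy

structure NestedBlocks (G : SimpleGraph V) (C : Set V) (π : V → V → Prop) (A : Set V) (k : ℕ) where
  Cs : Fin k → Set V
  Is : Fin k → Set V
  Cs_subset : ∀ i, Cs i ⊆ C
  disjoint_Cs : ∀ i j, i ≠ j → Disjoint (Cs i) (Cs j)
  disjoint_Is : ∀ i j, i ≠ j → Disjoint (Is i) (Is j)
  disjoint_Cs_Is : ∀ i j, Disjoint (Cs i) (Is j)
  iUnion_Is : ⋃ j, Is j = A
  neighborSet_eq : ∀ i, ∀ x ∈ Is i, G.neighborSet x = ⋃ j ≤ i, Cs j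
  exists_le_of_pi : ∀ i, ∀ y ∈ Cs i ∪ Is i, ∀ x, π x y → x ≠ y → ∃ j ≤ i, x ∈ Cs j ∪ Is j
  eq_of_pi : ∀ i, ∀ x ∈ Is i, ∀ x' ∈ Is i,
    (∃ y ∈ Cs i, π x y ∧ x ≠ y) → (∃ y ∈ Cs i, π x' y ∧ x' ≠ y) → x = x'

theorem nestedProperty_iff {G : SimpleGraph V} {C I A : Set V} {π : V → V → Prop} :
    NestedProperty G C I π A ↔
      (∀ x y, π x y → x ≠ y → y ∈ C → x ∈ C ∪ A) ∧ ∃ k, Nonempty (NestedBlocks G C π A k) := by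
  constructor
  · rintro ⟨hN1, k, Cs, Is, h₁, h₂, h₃, h₄, h₅, h₆, h₇, h₈⟩
    exact ⟨hN1, k, ⟨⟨Cs, Is, h₁, h₂, h₃, h₄, h₅, h₆, h₇, h₈⟩⟩⟩
  · rintro ⟨hN1, k, ⟨B⟩⟩
    exact ⟨hN1, k, B.Cs, B.Is, B.Cs_subset, B.disjoint_Cs, B.disjoint_Is, B.disjoint_Cs_Is,
      B.iUnion_Is, B.neighborSet_eq, B.exists_le_of_pi, B.eq_of_pi⟩

section DegreeClasses

variable [Fintype V] {G : SimpleGraph V} [DecidableRel G.Adj]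

def degClass (G : SimpleGraph V) [DecidableRel G.Adj] (A : Set V) (i : ℕ) : Set V :=
  {a | a ∈ A ∧ G.degree a = i}

def firstNbrClass (G : SimpleGraph V) [DecidableRel G.Adj] (A : Set V) (i : ℕ) : Set V :=
  {c | (∃ a ∈ degClass G A i, G.Adj a c) ∧ ∀ a ∈ A, G.Adj a c → i ≤ G.degree a}

variable {A C I : Set V}

theorem firstNbrClass_subset (hG : IsSplitPartition G C I) (hAI : A ⊆ I) (i : ℕ) :
    firstNbrClass G A i ⊆ C :=
  fun _ ⟨⟨_, ha, hac⟩, _⟩ => hG.mem_C_of_adj (hAI ha.1) hac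

theorem disjoint_firstNbrClass {i j : ℕ} (hij : i ≠ j) :
    Disjoint (firstNbrClass G A i) (firstNbrClass G A j) :=
  Set.disjoint_left.2 fun _ ⟨⟨a, ha, hac⟩, hi⟩ ⟨⟨b, hb, hbc⟩, hj⟩ =>
    hij (le_antisymm (hb.2 ▸ hi b hb.1 hbc) (ha.2 ▸ hj a ha.1 hac))

theorem disjoint_degClass {i j : ℕ} (hij : i ≠ j) : Disjoint (degClass G A i) (degClass G A j) :=
  Set.disjoint_left.2 fun _ hi hj => hij (hi.2.symm.trans hj.2)

theorem disjoint_firstNbrClass_degClass (hG : IsSplitPartition G C I) (hAI : A ⊆ I) (i j : ℕ) :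
    Disjoint (firstNbrClass G A i) (degClass G A j) :=
  Set.disjoint_left.2 fun _ hv hv' =>
    hG.mem_I_iff.1 (hAI hv'.1) (firstNbrClass_subset hG hAI i hv)

theorem iUnion_degClass : ⋃ i : Fin (Fintype.card V), degClass G A i = A := by
  ext a
  simp only [Set.mem_iUnion, degClass, Set.mem_ofPred_eq]
  exact ⟨fun ⟨_, ha, _⟩ => ha, fun ha => ⟨⟨G.degree a, G.degree_lt_card_verts a⟩, ha, rfl⟩⟩

theorem exists_mem_firstNbrClass {a c : V} (ha : a ∈ A) (hac : G.Adj a c) :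
    ∃ j ≤ G.degree a, c ∈ firstNbrClass G A j := by
  classical
  have hex : ∃ j, ∃ b ∈ degClass G A j, G.Adj b c := ⟨_, a, ⟨ha, rfl⟩, hac⟩
  exact ⟨Nat.find hex, Nat.find_min' hex ⟨a, ⟨ha, rfl⟩, hac⟩, Nat.find_spec hex,
    fun b hb hbc => Nat.find_min' hex ⟨b, ⟨hb, rfl⟩, hbc⟩⟩

theorem adj_of_mem_firstNbrClass
    (hmono : ∀ a ∈ A, ∀ b ∈ A, G.degree a ≤ G.degree b → G.neighborFinset a ⊆ G.neighborFinset b)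
    {x c : V} {j : ℕ} (hx : x ∈ A) (hc : c ∈ firstNbrClass G A j) (hj : j ≤ G.degree x) :
    G.Adj x c := by
  obtain ⟨⟨a, ⟨ha, hadeg⟩, hac⟩, -⟩ := hc
  exact (mem_neighborFinset _ _ _).1 (hmono a ha x hx (hadeg ▸ hj) ((mem_neighborFinset _ _ _).2 hac))

theorem neighborSet_eq_iUnion_firstNbrClass
    (hmono : ∀ a ∈ A, ∀ b ∈ A, G.degree a ≤ G.degree b → G.neighborFinset a ⊆ G.neighborFinset b)
    (i : Fin (Fintype.card V)) {x : V} (hx : x ∈ degClass G A i) :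
    G.neighborSet x = ⋃ j ≤ i, firstNbrClass G A j := by
  ext c
  simp only [mem_neighborSet, Set.mem_iUnion, exists_prop]
  constructor
  · intro hxc
    obtain ⟨j, hj, hc⟩ := exists_mem_firstNbrClass hx.1 hxc
    exact ⟨⟨j, hj.trans_lt (G.degree_lt_card_verts x)⟩, (hx.2 ▸ hj : j ≤ i), hc⟩
  · rintro ⟨j, hj, hc⟩
    exact adj_of_mem_firstNbrClass hmono hx.1 hc (hx.2 ▸ hj)

end DegreeClasses

namespace IsMCSOrderBy

variable [Fintype V] {α : Type*} [LinearOrder α] {G : SimpleGraph V} [DecidableRel G.Adj]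
  {C I : Set V} {f : V → α} {π : V → V → Prop}

theorem exists_mem_C_le_of_mem_forcedEarly (hM : IsMCSOrderBy G f) (hG : IsSplitPartition G C I)
    (hext : ∀ u v, π u v → u ≠ v → f u < f v) {a : V} (ha : a ∈ forcedEarly G C I π) :
    ∃ y ∈ C, f a ≤ f y := by
  obtain ⟨-, w, hw, haw, hne⟩ := ha
  exact hM.exists_mem_C_le hG hw (hext a w haw hne)

theorem neighborFinset_mono (hM : IsMCSOrderBy G f) (hf : Injective f)
    (hG : IsSplitPartition G C I) (hext : ∀ u v, π u v → u ≠ v → f u < f v) :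
    ∀ a ∈ forcedEarly G C I π, ∀ b ∈ forcedEarly G C I π,
      G.degree a ≤ G.degree b → G.neighborFinset a ⊆ G.neighborFinset b := by
  intro a ha b hb hdeg
  rcases lt_trichotomy (f a) (f b) with h | h | h
  · obtain ⟨y, hy, hby⟩ := hM.exists_mem_C_le_of_mem_forcedEarly hG hext hb
    exact hM.neighborFinset_subset_of_lt hG ha.1 hb.1 hy hby h
  · rw [hf h]
  · obtain ⟨y, hy, hay⟩ := hM.exists_mem_C_le_of_mem_forcedEarly hG hext ha
    exact (eq_of_subset_of_card_le (hM.neighborFinset_subset_of_lt hG hb.1 ha.1 hy hay h)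
      hdeg).superset

theorem exists_le_of_pi_of_mem_firstNbrClass (hM : IsMCSOrderBy G f) (hf : Injective f)
    (hG : IsSplitPartition G C I) (hext : ∀ u v, π u v → u ≠ v → f u < f v) {i : ℕ} {x y : V}
    (hy : y ∈ firstNbrClass G (forcedEarly G C I π) i) (hxy : π x y) (hne : x ≠ y) :
    ∃ j ≤ i, x ∈ firstNbrClass G (forcedEarly G C I π) j ∪ degClass G (forcedEarly G C I π) j := by
  obtain ⟨⟨a, ⟨haA, hadeg⟩, hay⟩, -⟩ := hy
  obtain ⟨y₀, hy₀, hay₀⟩ := hM.exists_mem_C_le_of_mem_forcedEarly hG hext haA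
  have hxy' := hext x y hxy hne
  by_cases hxC : x ∈ C
  · obtain ⟨j, hj, hx⟩ := exists_mem_firstNbrClass haA
      (hM.adj_of_adj_of_lt hf hG haA.1 hy₀ hay₀ hay hxC hxy')
    exact ⟨j, hadeg ▸ hj, Or.inl hx⟩
  have hxI := hG.mem_I_iff.2 hxC
  refine ⟨G.degree x, ?_, Or.inr ⟨⟨hxI, y, Or.inl (hG.mem_C_of_adj haA.1 hay), hxy, hne⟩, rfl⟩⟩
  rcases lt_trichotomy (f x) (f a) with h | h | h
  · exact hadeg ▸ card_le_card (hM.neighborFinset_subset_of_lt hG hxI haA.1 hy₀ hay₀ h)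
  · rw [hf h, hadeg]
  · exact absurd hxy' (hM.lt_of_adj_of_lt hG hxI haA.1 h hay).not_gt

theorem exists_le_of_pi_of_mem_degClass [IsPartialOrder V π] (hM : IsMCSOrderBy G f)
    (hG : IsSplitPartition G C I) (hext : ∀ u v, π u v → u ≠ v → f u < f v) {i : ℕ} {x y : V}
    (hy : y ∈ degClass G (forcedEarly G C I π) i) (hxy : π x y) (hne : x ≠ y) :
    ∃ j ≤ i, x ∈ firstNbrClass G (forcedEarly G C I π) j ∪ degClass G (forcedEarly G C I π) j := by
  obtain ⟨hyA, rfl⟩ := hy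
  obtain ⟨y₀, hy₀, hyy₀⟩ := hM.exists_mem_C_le_of_mem_forcedEarly hG hext hyA
  have hxy' := hext x y hxy hne
  by_cases hxC : x ∈ C
  · obtain ⟨j, hj, hx⟩ := exists_mem_firstNbrClass hyA
      (hM.adj_of_lt_of_mem_I hG hyA.1 hy₀ hyy₀ hxC hxy').symm
    exact ⟨j, hj, Or.inl hx⟩
  have hxI := hG.mem_I_iff.2 hxC
  have hdeg : G.degree x ≤ G.degree y :=
    card_le_card (hM.neighborFinset_subset_of_lt hG hxI hyA.1 hy₀ hyy₀ hxy')
  exact ⟨G.degree x, hdeg, Or.inr ⟨mem_forcedEarly_of_pi hxI hyA hxy hne hdeg, rfl⟩⟩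

theorem eq_of_mem_degClass (hM : IsMCSOrderBy G f) (hf : Injective f)
    (hG : IsSplitPartition G C I) (hext : ∀ u v, π u v → u ≠ v → f u < f v) {i : ℕ} {x x' : V}
    (hx : x ∈ degClass G (forcedEarly G C I π) i) (hx' : x' ∈ degClass G (forcedEarly G C I π) i)
    (h : ∃ y ∈ firstNbrClass G (forcedEarly G C I π) i, π x y ∧ x ≠ y)
    (h' : ∃ y ∈ firstNbrClass G (forcedEarly G C I π) i, π x' y ∧ x' ≠ y) : x = x' := by
  -- the later of the two would come after the common neighbour `y` that it precedes in `π`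
  have hlate : ∀ {b b'}, b ∈ degClass G (forcedEarly G C I π) i →
      b' ∈ degClass G (forcedEarly G C I π) i →
      (∃ y ∈ firstNbrClass G (forcedEarly G C I π) i, π b' y ∧ b' ≠ y) → ¬ f b < f b' := by
    rintro b b' hb hb' ⟨y, hy, hb'y, hne⟩ hlt
    have hby : G.Adj b y :=
      adj_of_mem_firstNbrClass (hM.neighborFinset_mono hf hG hext) hb.1 hy hb.2.ge
    exact (hext b' y hb'y hne).not_gt (hM.lt_of_adj_of_lt hG hb'.1.1 hb.1.1 hlt hby)
  rcases lt_trichotomy (f x) (f x') with hlt | heq | hlt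
  · exact absurd hlt (hlate hx hx' h')
  · exact hf heq
  · exact absurd hlt (hlate hx' hx h)

theorem nestedProperty [IsPartialOrder V π] (hM : IsMCSOrderBy G f) (hf : Injective f)
    (hG : IsSplitPartition G C I) (hext : ∀ u v, π u v → u ≠ v → f u < f v) :
    NestedProperty G C I π (forcedEarly G C I π) := by
  have hAI : forcedEarly G C I π ⊆ I := fun _ ha => ha.1
  refine nestedProperty_iff.2 ⟨fun x y hxy hne hyC => ?_, Fintype.card V, ⟨{
    Cs := fun i => firstNbrClass G (forcedEarly G C I π) i
    Is := fun i => degClass G (forcedEarly G C I π) i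
    Cs_subset := fun i => firstNbrClass_subset hG hAI i
    disjoint_Cs := fun _ _ hij => disjoint_firstNbrClass (Fin.val_injective.ne hij)
    disjoint_Is := fun _ _ hij => disjoint_degClass (Fin.val_injective.ne hij)
    disjoint_Cs_Is := fun i j => disjoint_firstNbrClass_degClass hG hAI i j
    iUnion_Is := iUnion_degClass
    neighborSet_eq := fun i _ hx =>
      neighborSet_eq_iUnion_firstNbrClass (hM.neighborFinset_mono hf hG hext) i hx
    exists_le_of_pi := fun i y hy x hxy hne => ?_
    eq_of_pi := fun _ _ hx _ hx' h h' => hM.eq_of_mem_degClass hf hG hext hx hx' h h' }⟩⟩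
  · by_cases hxC : x ∈ C
    · exact Or.inl hxC
    · exact Or.inr ⟨hG.mem_I_iff.2 hxC, y, Or.inl hyC, hxy, hne⟩
  · obtain ⟨j, hj, hx⟩ := hy.elim (hM.exists_le_of_pi_of_mem_firstNbrClass hf hG hext · hxy hne)
      (hM.exists_le_of_pi_of_mem_degClass hG hext · hxy hne)
    exact ⟨⟨j, hj.trans_lt i.isLt⟩, hj, hx⟩

end IsMCSOrderBy

namespace NestedBlocks

variable {G : SimpleGraph V} {C I A : Set V} {π : V → V → Prop} {k : ℕ}
  (B : NestedBlocks G C π A k)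

theorem mem_A_iff {v : V} : v ∈ A ↔ ∃ i, v ∈ B.Is i :=
  (Set.ext_iff.1 B.iUnion_Is v).symm.trans Set.mem_iUnion

theorem disjoint_union {i j : Fin k} (hij : i ≠ j) :
    Disjoint (B.Cs i ∪ B.Is i) (B.Cs j ∪ B.Is j) :=
  Disjoint.union_left (.union_right (B.disjoint_Cs i j hij) (B.disjoint_Cs_Is i j))
    (.union_right (B.disjoint_Cs_Is j i).symm (B.disjoint_Is i j hij))

def Trailing (v : V) : Prop := ∃ i, v ∈ B.Is i ∧ ¬ ∃ y ∈ B.Cs i, π v y ∧ v ≠ y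

theorem mem_A_of_trailing {v : V} (h : B.Trailing v) : v ∈ A :=
  let ⟨i, hi, _⟩ := h
  B.mem_A_iff.2 ⟨i, hi⟩

theorem not_trailing_iff {v : V} {i : Fin k} (hv : v ∈ B.Is i) :
    ¬ B.Trailing v ↔ ∃ y ∈ B.Cs i, π v y ∧ v ≠ y := by
  refine ⟨fun h => by_contra fun h' => h ⟨i, hv, h'⟩, fun hy ⟨j, hj, hj'⟩ => hj' ?_⟩
  obtain rfl : j = i := by_contra fun hne => Set.disjoint_left.1 (B.disjoint_Is j i hne) hj hv
  exact hy

theorem eq_of_not_trailing {x x' : V} {i : Fin k} (hx : x ∈ B.Is i) (hx' : x' ∈ B.Is i)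
    (h : ¬ B.Trailing x) (h' : ¬ B.Trailing x') : x = x' :=
  B.eq_of_pi i x hx x' hx' ((B.not_trailing_iff hx).1 h) ((B.not_trailing_iff hx').1 h')

variable [Fintype V] [DecidableRel G.Adj]

noncomputable def block (v : V) : ℕ := by
  classical
  exact if h : ∃ i, v ∈ B.Cs i ∪ B.Is i then h.choose
    else if v ∈ C then k else k + 1 + (Fintype.card V - G.degree v)

theorem block_eq {v : V} {i : Fin k} (hv : v ∈ B.Cs i ∪ B.Is i) : B.block v = i := by
  have hex : ∃ i, v ∈ B.Cs i ∪ B.Is i := ⟨i, hv⟩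
  rw [block, dif_pos hex]
  by_contra hne
  exact Set.disjoint_left.1 (B.disjoint_union fun h => hne (congrArg Fin.val h))
    hex.choose_spec hv

theorem mem_of_block_eq {v : V} {i : Fin k} (h : B.block v = i) : v ∈ B.Cs i ∪ B.Is i := by
  by_cases hex : ∃ i, v ∈ B.Cs i ∪ B.Is i
  · obtain ⟨j, hj⟩ := hex
    obtain rfl : j = i := Fin.ext ((B.block_eq hj).symm.trans h)
    exact hj
  · have := i.isLt
    rw [block, dif_neg hex] at h
    split_ifs at h <;> omega

theorem block_le_of_mem_C {v : V} (hv : v ∈ C) : B.block v ≤ k := by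
  rw [block]
  split_ifs with h
  · exact h.choose.isLt.le
  · exact le_rfl

theorem block_lt_of_mem_A {v : V} (hv : v ∈ A) : B.block v < k := by
  obtain ⟨i, hi⟩ := B.mem_A_iff.1 hv
  exact B.block_eq (Or.inr hi) ▸ i.isLt

theorem block_of_mem_C {v : V} (hv : ∀ i, v ∉ B.Cs i ∪ B.Is i) (hvC : v ∈ C) : B.block v = k := by
  rw [block, dif_neg (not_exists.2 hv), if_pos hvC]

theorem block_of_mem_I (hG : IsSplitPartition G C I) {v : V} (hv : v ∈ I) (hvA : v ∉ A) :
    B.block v = k + 1 + (Fintype.card V - G.degree v) := by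
  have hvC := hG.mem_I_iff.1 hv
  have hex : ¬ ∃ i, v ∈ B.Cs i ∪ B.Is i := by
    rintro ⟨i, hi | hi⟩
    · exact hvC (B.Cs_subset i hi)
    · exact hvA (B.mem_A_iff.2 ⟨i, hi⟩)
  rw [block, dif_neg hex, if_neg hvC]

/-- Inside block `i` the vertices of `I_i` that precede no vertex of `C_i` in `π` come last;
by (N4) at most one vertex of `I_i` stays among those of `C_i`. -/
noncomputable def stage (v : V) : ℕ ×ₗ ℕ := by
  classical
  exact toLex (B.block v, if B.Trailing v then 1 else 0)

theorem stage_le_iff {u v : V} : B.stage u ≤ B.stage v ↔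
    B.block u < B.block v ∨ B.block u = B.block v ∧ (B.Trailing u → B.Trailing v) := by
  simp only [stage, Prod.Lex.toLex_le_toLex]
  by_cases hu : B.Trailing u <;> by_cases hv : B.Trailing v <;> simp [hu, hv]

theorem block_le_of_stage_le {u v : V} (h : B.stage u ≤ B.stage v) : B.block u ≤ B.block v := by
  rcases B.stage_le_iff.1 h with h | ⟨h, -⟩ <;> omega

theorem not_trailing_of_stage_le {u v : V} (h : B.stage u ≤ B.stage v)
    (hb : B.block u = B.block v) (hv : ¬ B.Trailing v) : ¬ B.Trailing u := by
  rcases B.stage_le_iff.1 h with h | ⟨-, h⟩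
  · omega
  · exact fun hu => hv (h hu)

theorem stage_le_of_pi_of_mem [IsTrans V π] (hG : IsSplitPartition G C I) (hAI : A ⊆ I)
    {u v : V} {i : Fin k} (hv : v ∈ B.Cs i ∪ B.Is i) (huv : π u v) (hne : u ≠ v) :
    B.stage u ≤ B.stage v := by
  obtain ⟨j, hji, hu⟩ := B.exists_le_of_pi i v hv u huv hne
  rw [stage_le_iff, B.block_eq hv, B.block_eq hu]
  rcases hji.lt_or_eq with hlt | rfl
  · exact Or.inl hlt
  refine Or.inr ⟨rfl, fun hut => by_contra fun hvt => (B.not_trailing_iff (i := j) ?_).2 ?_ hut⟩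
  · have huI := hAI (B.mem_A_of_trailing hut)
    exact hu.resolve_left fun h => hG.mem_I_iff.1 huI (B.Cs_subset j h)
  rcases hv with hv | hv
  · exact ⟨v, hv, huv, hne⟩
  · obtain ⟨y, hy, hvy, -⟩ := (B.not_trailing_iff hv).1 hvt
    refine ⟨y, hy, trans_of π huv hvy, ?_⟩
    rintro rfl
    exact hG.mem_I_iff.1 (hAI (B.mem_A_of_trailing hut)) (B.Cs_subset j hy)

theorem stage_le_of_pi [IsTrans V π] (hG : IsSplitPartition G C I)
    (hA : A = forcedEarly G C I π) (hN1 : ∀ x y, π x y → x ≠ y → y ∈ C → x ∈ C ∪ A)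
    {u v : V} (huv : π u v) (hne : u ≠ v) : B.stage u ≤ B.stage v := by
  have hAI : A ⊆ I := hA ▸ fun _ ha => ha.1
  by_cases hv : ∃ i, v ∈ B.Cs i ∪ B.Is i
  · obtain ⟨i, hv⟩ := hv
    exact B.stage_le_of_pi_of_mem hG hAI hv huv hne
  simp only [not_exists] at hv
  rw [stage_le_iff]
  by_cases hvC : v ∈ C
  · rw [B.block_of_mem_C hv hvC]
    by_cases hu : ∃ i, u ∈ B.Cs i ∪ B.Is i
    · obtain ⟨i, hu⟩ := hu
      exact Or.inl (B.block_eq hu ▸ i.isLt)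
    simp only [not_exists] at hu
    have huC : u ∈ C := (hN1 u v huv hne hvC).resolve_right fun h =>
      let ⟨i, hi⟩ := B.mem_A_iff.1 h
      hu i (Or.inr hi)
    exact Or.inr ⟨B.block_of_mem_C hu huC, fun ⟨i, hi, _⟩ => absurd (Or.inr hi) (hu i)⟩
  have hvA : v ∉ A := fun h => let ⟨i, hi⟩ := B.mem_A_iff.1 h; hv i (Or.inr hi)
  rw [B.block_of_mem_I hG (hG.mem_I_iff.2 hvC) hvA]
  by_cases huC : u ∈ C
  · exact Or.inl (by have := B.block_le_of_mem_C huC; omega)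
  by_cases huA : u ∈ A
  · exact Or.inl (by have := B.block_lt_of_mem_A huA; omega)
  have hdeg : G.degree v ≤ G.degree u := by
    by_contra! h
    exact huA (hA ▸ ⟨hG.mem_I_iff.2 huC, v, Or.inr h, huv, hne⟩)
  have := G.degree_lt_card_verts u
  rw [B.block_of_mem_I hG (hG.mem_I_iff.2 huC) huA]
  rcases hdeg.lt_or_eq with h | h
  · exact Or.inl (by omega)
  · exact Or.inr ⟨by rw [h], fun hut => absurd (B.mem_A_of_trailing hut) huA⟩

theorem adj_of_mem_C_of_stage_le (hG : IsSplitPartition G C I) (hAI : A ⊆ I) {z u : V}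
    (hz : z ∈ C) (hu : u ∈ C ∪ A) (hzu : B.stage z ≤ B.stage u) (hne : z ≠ u) : G.Adj z u := by
  rcases hu with hu | hu
  · exact hG.isClique hz hu hne
  obtain ⟨i, hui⟩ := B.mem_A_iff.1 hu
  have hbzu := B.block_le_of_stage_le hzu
  rw [B.block_eq (Or.inr hui)] at hbzu
  have hzCs : z ∈ B.Cs ⟨B.block z, hbzu.trans_lt i.isLt⟩ :=
    (B.mem_of_block_eq rfl).resolve_right fun h =>
      hG.mem_I_iff.1 (hAI (B.mem_A_iff.2 ⟨_, h⟩)) hz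
  have hzN : z ∈ G.neighborSet u := by
    rw [B.neighborSet_eq i u hui]
    exact Set.mem_iUnion₂.2 ⟨_, hbzu, hzCs⟩
  exact hzN.symm

theorem adj_of_mem_I_of_stage_le (hG : IsSplitPartition G C I) (hAI : A ⊆ I) {z u v : V}
    (hz : z ∈ I) (hu : u ∈ C ∪ A) (hzu : B.stage z ≤ B.stage u) (hne : z ≠ u)
    (huv : B.stage u ≤ B.stage v) (hzv : G.Adj z v) : G.Adj z u := by
  have hbzu := B.block_le_of_stage_le hzu
  have hbuv := B.block_le_of_stage_le huv
  have hzA : z ∈ A := by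
    by_contra hzA
    have := B.block_of_mem_I hG hz hzA
    rcases hu with hu | hu
    · have := B.block_le_of_mem_C hu; omega
    · have := B.block_lt_of_mem_A hu; omega
  obtain ⟨j, hzj⟩ := B.mem_A_iff.1 hzA
  have hvN : v ∈ G.neighborSet z := hzv
  rw [B.neighborSet_eq j z hzj, Set.mem_iUnion₂] at hvN
  obtain ⟨l, hlj, hvl⟩ := hvN
  have hbz := B.block_eq (Or.inr hzj)
  have hbv := B.block_eq (Or.inl hvl)
  have hlj' : (l : ℕ) ≤ j := hlj
  have hu' : u ∈ B.Cs j ∪ B.Is j := B.mem_of_block_eq (by omega)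
  rcases hu with huC | huA
  · have huCs : u ∈ B.Cs j := hu'.resolve_right fun h =>
      hG.mem_I_iff.1 (hAI (B.mem_A_iff.2 ⟨j, h⟩)) huC
    have huN : u ∈ G.neighborSet z := by
      rw [B.neighborSet_eq j z hzj]
      exact Set.mem_iUnion₂.2 ⟨j, le_rfl, huCs⟩
    exact huN
  exfalso
  obtain rfl : l = j := Fin.ext (by omega)
  have huIs : u ∈ B.Is l := hu'.resolve_left fun h => hG.mem_I_iff.1 (hAI huA) (B.Cs_subset l h)
  have hvt : ¬ B.Trailing v := fun h =>
    hG.mem_I_iff.1 (hAI (B.mem_A_of_trailing h)) (B.Cs_subset l hvl)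
  have hut := B.not_trailing_of_stage_le huv (by omega) hvt
  exact hne (B.eq_of_not_trailing hzj huIs (B.not_trailing_of_stage_le hzu (by omega) hut) hut)

variable {α : Type*} [LinearOrder α] {f : V → α}

theorem card_earlierNbrs_le_of_not_mem (hG : IsSplitPartition G C I)
    (hf : ∀ u v, f u ≤ f v → B.stage u ≤ B.stage v) {u v : V} (hu : u ∈ I) (huA : u ∉ A)
    (huv : f u ≤ f v) : #(earlierNbrs G f u v) ≤ #(earlierNbrs G f u u) := by
  have hbu := B.block_of_mem_I hG hu huA
  have hbuv := B.block_le_of_stage_le (hf u v huv)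
  have hvC : v ∉ C := fun h => by have := B.block_le_of_mem_C h; omega
  have hvA : v ∉ A := fun h => by have := B.block_lt_of_mem_A h; omega
  have hbv := B.block_of_mem_I hG (hG.mem_I_iff.2 hvC) hvA
  have hdeg : G.degree v ≤ G.degree u := by
    have := G.degree_lt_card_verts u
    have := G.degree_lt_card_verts v
    omega
  have hall : earlierNbrs G f u u = G.neighborFinset u :=
    earlierNbrs_eq_neighborFinset G fun z hz => by
      by_contra! h
      have := B.block_le_of_stage_le (hf u z h)
      have := B.block_le_of_mem_C (hG.mem_C_of_adj hu hz.symm)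
      omega
  calc #(earlierNbrs G f u v) ≤ G.degree v := card_earlierNbrs_le_degree G f u v
    _ ≤ G.degree u := hdeg
    _ = #(earlierNbrs G f u u) := by rw [hall, card_neighborFinset_eq_degree]

theorem isMCSOrderBy (hG : IsSplitPartition G C I) (hAI : A ⊆ I)
    (hf : ∀ u v, f u ≤ f v → B.stage u ≤ B.stage v) : IsMCSOrderBy G f := by
  intro u v huv
  by_cases hu : u ∈ C ∪ A
  · refine card_le_card fun z hz => ?_
    simp only [earlierNbrs, mem_filter, mem_univ, true_and] at hz ⊢
    have hzu := hf z u hz.1.le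
    have hne : z ≠ u := ne_of_apply_ne f hz.1.ne
    refine ⟨hz.1, ?_⟩
    by_cases hzC : z ∈ C
    · exact B.adj_of_mem_C_of_stage_le hG hAI hzC hu hzu hne
    · exact B.adj_of_mem_I_of_stage_le hG hAI (hG.mem_I_iff.2 hzC) hu hzu hne (hf u v huv) hz.2
  · rw [Set.mem_union, not_or] at hu
    exact B.card_earlierNbrs_le_of_not_mem hG hf (hG.mem_I_iff.2 hu.1) hu.2 huv

end NestedBlocks

theorem exists_isSearchOrdering_of_nestedProperty [Fintype V] {G : SimpleGraph V}
    [DecidableRel G.Adj] {C I A : Set V} {π : V → V → Prop} [IsPartialOrder V π]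
    (hG : IsSplitPartition G C I) (hA : A = forcedEarly G C I π) (hN : NestedProperty G C I π A) :
    ∃ σ : Fin (Fintype.card V) ≃ V, IsSearchOrdering mcsLt G σ ∧
      ∀ u v, π u v → u ≠ v → σ.symm u < σ.symm v := by
  obtain ⟨hN1, k, ⟨B⟩⟩ := nestedProperty_iff.1 hN
  obtain ⟨r, hr_inj, hr⟩ := exists_injective_rank π
  let key : V → (ℕ ×ₗ ℕ) ×ₗ ℕ := fun v => toLex (B.stage v, r v)
  have hkey_inj : Injective key := fun u v h => hr_inj (congrArg (fun p => (ofLex p).2) h)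
  have hkey_stage : ∀ u v, key u ≤ key v → B.stage u ≤ B.stage v := fun u v h =>
    (Prod.Lex.toLex_le_toLex.1 h).elim le_of_lt fun h => h.1.le
  have hkey_pi : ∀ u v, π u v → u ≠ v → key u < key v := fun u v huv hne =>
    Prod.Lex.toLex_lt_toLex.2 ((B.stage_le_of_pi hG hA hN1 huv hne).lt_or_eq.imp_right
      fun h => ⟨h, hr u v huv hne⟩)
  obtain ⟨σ, hσ⟩ := exists_equiv_fin_symm_lt_iff hkey_inj
  have hAI : A ⊆ I := hA ▸ fun _ ha => ha.1
  exact ⟨σ, (isSearchOrdering_mcsLt_iff G σ).2 ((isMCSOrderBy_congr G hσ).2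
    (B.isMCSOrderBy hG hAI hkey_stage)), fun u v huv hne => (hσ u v).2 (hkey_pi u v huv hne)⟩

/-- There is an MCS ordering of a split graph `G` extending `π` iff `(π, A)` fulfills
the nested property, where `A = {u ∈ I : ∃ v with (v ∈ C or |N(u)| < |N(v)|) and
u ≺_π v}`. -/
theorem mcs_extension_iff_nested (G : SimpleGraph V) [Fintype V] [DecidableRel G.Adj]
    (C I : Set V) (hpart : ∀ v : V, (v ∈ C ∧ v ∉ I) ∨ (v ∈ I ∧ v ∉ C))
    (hC : G.IsClique C) (hI : ∀ u ∈ I, ∀ v ∈ I, ¬ G.Adj u v)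
    (π : V → V → Prop) (hπ : IsPartialOrder V π)
    (A : Set V)
    (hA : A = {u | u ∈ I ∧ ∃ v : V,
      (v ∈ C ∨ (G.neighborFinset u).card < (G.neighborFinset v).card) ∧
      π u v ∧ u ≠ v}) :
    (∃ σ : Fin (Fintype.card V) ≃ V, IsSearchOrdering mcsLt G σ ∧
        ∀ u v : V, π u v → u ≠ v → σ.symm u < σ.symm v) ↔
      NestedProperty G C I π A := by
  have hG : IsSplitPartition G C I := ⟨hpart, hC, hI⟩
  have hA' : A = forcedEarly G C I π := hA
  constructor
  · rintro ⟨σ, hσ, hext⟩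
    exact hA' ▸ ((isSearchOrdering_mcsLt_iff G σ).1 hσ).nestedProperty σ.symm.injective hG hext
  · exact exists_isSearchOrdering_of_nestedProperty hG hA'
end

section
/- Correctness of the greedy OBA algorithm: given a finite set M, a family Q ⊆ P(M) and a relation R ⊆ Q × Q, a linear ordering of M fulfilling the one-before-all property exists if and only if the following greedy process empties M: repeatedly pick any element x ∈ M such that x is not contained in any set B with a still-active constraint (A,B) ∈ R with A ∩ (picked elements) = ∅; append x; a constraint (A,B) becomes inactive once some element of A is picked. -/
/-!
If a ranking satisfies the one-before-all property, then among the unpicked elements the one of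
least rank is always eligible, so no greedy run can stop before all of `M` is picked. Conversely,
the order in which a complete greedy run picks the elements has the property: for `(A, B) ∈ R`,
the first element of `B` to be picked was eligible, so some element of `A` came before it.
-/

variable {M : Type*}

/-- `x` is eligible w.r.t. the set `P` of picked elements: `x` is unpicked and
for every constraint `(A,B) ∈ R` with `x ∈ B` that is still active
(`A ∩ P = ∅` would make it active), some element of `A` has been picked. -/
def ObaEligible [DecidableEq M] (R : Set (Set M × Set M)) (P : Finset M) (x : M) : Prop :=
  x ∉ P ∧ ∀ p ∈ R, x ∈ p.2 → ∃ a ∈ p.1, a ∈ P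

/-- A run of the greedy OBA algorithm: a duplicate-free list in which every element
is eligible w.r.t. the preceding prefix. -/
def ObaRun [DecidableEq M] (R : Set (Set M × Set M)) (l : List M) : Prop :=
  l.Nodup ∧ ∀ (i : ℕ) (h : i < l.length),
    ObaEligible R ((l.take i).toFinset) (l.get ⟨i, h⟩)

def OneBeforeAll {β : Type*} [LT β] (R : Set (Set M × Set M)) (r : M → β) : Prop :=
  ∀ p ∈ R, p.2 ≠ ∅ → ∃ a ∈ p.1, ∀ b ∈ p.2, r a < r b

section

variable [DecidableEq M] {R : Set (Set M × Set M)}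

theorem OneBeforeAll.exists_obaEligible {β : Type*} [LT β] [WellFoundedLT β] {r : M → β}
    (h : OneBeforeAll R r) {P : Finset M} {x : M} (hx : x ∉ P) : ∃ y, ObaEligible R P y := by
  set y := Function.argminOn r {y | y ∉ P} ⟨x, hx⟩
  have hyP : y ∉ P := Function.argminOn_mem r {y | y ∉ P} ⟨x, hx⟩
  refine ⟨y, hyP, fun p hp hyB => ?_⟩
  obtain ⟨a, ha, hab⟩ := h p hp (Set.nonempty_iff_ne_empty.1 ⟨y, hyB⟩)
  by_contra! haP
  exact Function.not_lt_argminOn r {y | y ∉ P} (haP a ha) (hab y hyB)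

theorem obaRun_nil : ObaRun R ([] : List M) :=
  ⟨List.nodup_nil, fun _ h => absurd h (Nat.not_lt_zero _)⟩

theorem ObaRun.append {l : List M} {x : M} (hl : ObaRun R l)
    (hx : ObaEligible R l.toFinset x) : ObaRun R (l ++ [x]) := by
  have hxl : x ∉ l := fun h => hx.1 (List.mem_toFinset.2 h)
  refine ⟨hl.1.append (List.nodup_singleton x) (by simpa using hxl), fun i hi => ?_⟩
  rcases lt_or_eq_of_le (Nat.le_of_lt_succ (by simpa using hi)) with hi | rfl
  · simpa [List.take_append_of_le_length hi.le, List.getElem_append_left hi] using hl.2 i hi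
  · simpa using hx

theorem exists_maximal_obaRun [Fintype M] :
    ∃ l : List M, ObaRun R l ∧ ∀ x, ¬ ObaEligible R l.toFinset x := by
  obtain ⟨l, hl, hmin⟩ := (measure fun l : List M => Fintype.card M - l.length).wf.has_min
    {l | ObaRun R l} ⟨[], obaRun_nil⟩
  refine ⟨l, hl, fun x hx => hmin _ (hl.append hx) ?_⟩
  have hlen : (l ++ [x]).length ≤ Fintype.card M := (hl.append hx).1.length_le_card
  change Fintype.card M - (l ++ [x]).length < Fintype.card M - l.length
  simp only [List.length_append, List.length_singleton] at hlen ⊢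
  omega

theorem ObaRun.exists_idxOf_lt {l : List M} (hl : ObaRun R l) {p : Set M × Set M} (hp : p ∈ R)
    {b : M} (hbB : b ∈ p.2) (hbl : b ∈ l) : ∃ a ∈ p.1, l.idxOf a < l.idxOf b := by
  have hb : l.idxOf b < l.length := List.idxOf_lt_length_iff.2 hbl
  obtain ⟨a, ha, haP⟩ := (hl.2 _ hb).2 p hp (by simpa using hbB)
  have hal : a ∈ l.take (l.idxOf b) := List.mem_toFinset.1 haP
  exact ⟨a, ha, (List.mem_take_iff_idxOf_lt (List.mem_of_mem_take hal)).1 hal⟩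

theorem ObaRun.oneBeforeAll_idxOf {l : List M} (hl : ObaRun R l) (hall : ∀ x, x ∈ l) :
    OneBeforeAll R l.idxOf := by
  intro p hp hne
  obtain ⟨b, hb⟩ := Set.nonempty_iff_ne_empty.2 hne
  obtain ⟨a, ha, hlt⟩ := hl.exists_idxOf_lt hp (Function.argminOn_mem l.idxOf p.2 ⟨b, hb⟩)
    (hall _)
  exact ⟨a, ha, fun c hc => hlt.trans_le (Function.argminOn_le l.idxOf p.2 hc)⟩

end

theorem greedy_oba_correct_general [Fintype M] [DecidableEq M]
    (R : Set (Set M × Set M)) :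
    (∃ σ : Fin (Fintype.card M) ≃ M,
        ∀ p ∈ R, p.2 ≠ ∅ → ∃ a ∈ p.1, ∀ b ∈ p.2, σ.symm a < σ.symm b) ↔
      (∀ l : List M, ObaRun R l →
        (∀ x : M, ¬ ObaEligible R l.toFinset x) → ∀ x : M, x ∈ l) := by
  constructor
  · rintro ⟨σ, hσ⟩ l _ hmax x
    by_contra hx
    obtain ⟨y, hy⟩ := OneBeforeAll.exists_obaEligible (r := σ.symm) hσ
      (mt List.mem_toFinset.1 hx)
    exact hmax y hy
  · intro hgreedy
    obtain ⟨l, hl, hmax⟩ := exists_maximal_obaRun (R := R)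
    have hall := hgreedy l hl hmax
    let e := hl.1.getEquivOfForallMemList l hall
    have hlen : l.length = Fintype.card M := (Fintype.card_fin _).symm.trans (Fintype.card_congr e)
    refine ⟨(finCongr hlen).symm.trans e, fun p hp hne => ?_⟩
    simpa [e, Fin.lt_def] using hl.oneBeforeAll_idxOf hall p hp hne

/-- Correctness of the greedy OBA algorithm: a linear ordering of `M` fulfilling the
one-before-all property for `(Q, R)` exists iff every maximal greedy run picks all
elements of `M`. -/
theorem greedy_oba_correct [Fintype M] [DecidableEq M]
    (Q : Set (Set M)) (R : Set (Set M × Set M))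
    (hR : ∀ p ∈ R, p.1 ∈ Q ∧ p.2 ∈ Q) :
    (∃ σ : Fin (Fintype.card M) ≃ M,
        ∀ p ∈ R, p.2 ≠ ∅ → ∃ a ∈ p.1, ∀ b ∈ p.2, σ.symm a < σ.symm b) ↔
      (∀ l : List M, ObaRun R l →
        (∀ x : M, ¬ ObaEligible R l.toFinset x) → ∀ x : M, x ∈ l) :=
  greedy_oba_correct_general R
end

section
/- Let G be a split graph with split partition (C,I) and σ an MNS ordering of G. If x ∈ I precedes some vertex of C in σ, z ∈ I satisfies N(z) ⊊ N(x), and x ≺_σ z, then z appears after all vertices of N(x) in σ. -/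
open Finset

variable {V : Type*} {n : ℕ}

/-- Let `σ` be an MNS ordering of a split graph with clique `C` and independent set `I`.
If `x ∈ I` precedes some vertex of `C` in `σ`, `z ∈ I` satisfies `N(z) ⊊ N(x)`, and
`x ≺_σ z`, then `z` is to the right of all of `N(x)` in `σ`. -/
theorem mns_premature_consequence (G : SimpleGraph V) [DecidableRel G.Adj] (σ : Fin n ≃ V)
    (C I : Set V) (hpart : ∀ v : V, (v ∈ C ∧ v ∉ I) ∨ (v ∈ I ∧ v ∉ C))
    (hC : G.IsClique C) (hI : ∀ u ∈ I, ∀ v ∈ I, ¬ G.Adj u v)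
    (hσ : IsSearchOrdering mnsLt G σ)
    (x z : V) (hx : x ∈ I) (hz : z ∈ I)
    (hprem : ∃ c ∈ C, σ.symm x < σ.symm c)
    (hsub : G.neighborSet z ⊂ G.neighborSet x)
    (hxz : σ.symm x < σ.symm z) :
    ∀ u ∈ G.neighborSet x, σ.symm u < σ.symm z := by
  intro u hu
  rw [SimpleGraph.mem_neighborSet] at hu
  by_contra hlt
  -- u is in C
  have huC : u ∈ C := by
    rcases hpart u with ⟨h1, _⟩ | ⟨h1, _⟩
    · exact h1
    · exact absurd hu (hI x hx u h1)
  have hij : σ.symm z ≤ σ.symm u := le_of_not_gt hlt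
  have hns := hσ (σ.symm z) (σ.symm u) hij
  simp only [mnsLt, Equiv.apply_symm_apply] at hns
  -- label of z ⊆ label of u at step σ.symm z
  have hsubL : labelF G σ (σ.symm z) z ⊆ labelF G σ (σ.symm z) u := by
    intro k hk
    simp only [labelF, Finset.mem_filter, Finset.mem_univ, true_and] at hk ⊢
    obtain ⟨hki, hadj⟩ := hk
    refine ⟨hki, ?_⟩
    have hkC : σ k ∈ C := by
      rcases hpart (σ k) with ⟨h1, _⟩ | ⟨h1, _⟩
      · exact h1
      · exact absurd hadj (hI (σ k) h1 z hz)
    have hne : σ k ≠ u := by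
      intro h
      have : k = σ.symm u := by rw [← h, Equiv.symm_apply_apply]
      exact absurd (this ▸ hki) (not_lt.mpr hij)
    exact hC hkC huC hne
  have heq : labelF G σ (σ.symm z) z = labelF G σ (σ.symm z) u := by
    rcases eq_or_ne (labelF G σ (σ.symm z) z) (labelF G σ (σ.symm z) u) with h | h
    · exact h
    · exact absurd ⟨hsubL, fun hh => h (subset_antisymm hsubL hh)⟩ hns
  have hxin : σ.symm x ∈ labelF G σ (σ.symm z) u := by
    simp only [labelF, Finset.mem_filter, Finset.mem_univ, true_and,
      Equiv.apply_symm_apply]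
    exact ⟨hxz, hu⟩
  rw [← heq] at hxin
  simp only [labelF, Finset.mem_filter, Finset.mem_univ, true_and,
    Equiv.apply_symm_apply] at hxin
  exact hI x hx z hz hxin.2
end
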